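/- arXiv:2005.01260 — 6 statements merged into one kernel-verified Lean document; each statement's English description precedes it below -/
import Mathlib

section
/- Let $f$ be a smooth function on a Riemannian manifold with $\nabla^2 f = h\,\mathrm{Id}$ for a smooth function $h$. Then for any point $q$ with $\nabla f(q)\neq 0$ and any unit vector $z$ orthogonal to $\nabla f(q)$, the sectional curvature of the plane spanned by $\nabla f(q)$ and $z$ equals $-\langle \nabla f, \nabla h\rangle(q)/|\nabla f(q)|^2$; in particular this value is independent of the choice of $z$. -/
open scoped RealInnerProductSpace
noncomputable section

/-- The constant vector field with value `u` (in a fixed chart). -/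
def VConst {E : Type*} (u : E) : E → E := fun _ => u

/-- `g` is a (smooth) Riemannian metric, written in a fixed global chart:
at each point `x`, `g x` is a symmetric positive definite bilinear form. -/
structure IsMetric {E : Type*} [NormedAddCommGroup E] [NormedSpace ℝ E]
    (g : E → E → E → ℝ) : Prop where
  symm : ∀ x u v, g x u v = g x v u
  add_left : ∀ x u v w, g x (u + v) w = g x u w + g x v w
  smul_left : ∀ x (a : ℝ) u v, g x (a • u) v = a * g x u v
  posdef : ∀ x u, u ≠ 0 → 0 < g x u u
  smooth : ∀ u v, ContDiff ℝ (⊤ : ℕ∞) fun x => g x u v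

/-- The Lie bracket of vector fields, written in the chart. -/
def bracketVF {E : Type*} [NormedAddCommGroup E] [NormedSpace ℝ E]
    (X Y : E → E) : E → E :=
  fun x => fderiv ℝ Y x (X x) - fderiv ℝ X x (Y x)

/-- `D` is the Levi-Civita connection of the metric `g`:  a torsion-free,
metric compatible covariant derivative on vector fields. -/
structure IsLeviCivita {E : Type*} [NormedAddCommGroup E] [NormedSpace ℝ E]
    (g : E → E → E → ℝ) (D : (E → E) → (E → E) → (E → E)) : Prop where
  smooth : ∀ X Y, ContDiff ℝ (⊤ : ℕ∞) X → ContDiff ℝ (⊤ : ℕ∞) Y → ContDiff ℝ (⊤ : ℕ∞) (D X Y)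
  add_left : ∀ X Y Z, D (X + Y) Z = D X Z + D Y Z
  add_right : ∀ X Y Z, D X (Y + Z) = D X Y + D X Z
  tensor_left : ∀ (φ : E → ℝ) (X Y : E → E), ContDiff ℝ (⊤ : ℕ∞) φ → ContDiff ℝ (⊤ : ℕ∞) X →
    ContDiff ℝ (⊤ : ℕ∞) Y → D (fun x => φ x • X x) Y = fun x => φ x • D X Y x
  leibniz : ∀ (φ : E → ℝ) (X Y : E → E), ContDiff ℝ (⊤ : ℕ∞) φ → ContDiff ℝ (⊤ : ℕ∞) X →
    ContDiff ℝ (⊤ : ℕ∞) Y →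
    D X (fun x => φ x • Y x) = fun x => fderiv ℝ φ x (X x) • Y x + φ x • D X Y x
  torsion_free : ∀ X Y, ContDiff ℝ (⊤ : ℕ∞) X → ContDiff ℝ (⊤ : ℕ∞) Y → D X Y - D Y X = bracketVF X Y
  compat : ∀ X Y Z, ContDiff ℝ (⊤ : ℕ∞) X → ContDiff ℝ (⊤ : ℕ∞) Y → ContDiff ℝ (⊤ : ℕ∞) Z → ∀ x,
    fderiv ℝ (fun y => g y (Y y) (Z y)) x (X x) =
      g x (D X Y x) (Z x) + g x (Y x) (D X Z x)

/-- The curvature tensor `R(X,Y)Z` of the connection `D`. -/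
def curv {E : Type*} [NormedAddCommGroup E] [NormedSpace ℝ E]
    (D : (E → E) → (E → E) → (E → E)) (X Y Z : E → E) : E → E :=
  D X (D Y Z) - D Y (D X Z) - D (bracketVF X Y) Z

/-- The sectional curvature at `x` of the plane spanned by `u` and `v`. -/
def secCurv {E : Type*} [NormedAddCommGroup E] [NormedSpace ℝ E]
    (g : E → E → E → ℝ) (D : (E → E) → (E → E) → (E → E)) (x u v : E) : ℝ :=
  g x (curv D (VConst u) (VConst v) (VConst v) x) u /
    (g x u u * g x v v - (g x u v) ^ 2)

/-- `G` is the Riemannian gradient of `f` with respect to `g`. -/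
def IsGradient {E : Type*} [NormedAddCommGroup E] [NormedSpace ℝ E]
    (g : E → E → E → ℝ) (f : E → ℝ) (G : E → E) : Prop :=
  ∀ x v, g x (G x) v = fderiv ℝ f x v

/-- The Hessian form `∇²f (u,v)` of a function with gradient vector field `G`. -/
def hessForm {E : Type*} [NormedAddCommGroup E] [NormedSpace ℝ E]
    (g : E → E → E → ℝ) (D : (E → E) → (E → E) → (E → E)) (G : E → E)
    (x u v : E) : ℝ :=
  g x (D (VConst u) G x) v

/-! ### Auxiliary lemmas -/


theorem VConst_apply {E : Type*} (u x : E) : VConst u x = u := rfl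

/-- Clairaut: the second derivative of a smooth real function is symmetric. -/
lemma clairaut_aux {E : Type*} [NormedAddCommGroup E] [NormedSpace ℝ E]
    (Ψ : E → ℝ) (hΨ : ContDiff ℝ (⊤ : ℕ∞) Ψ) (q v w : E) :
    fderiv ℝ (fun y => fderiv ℝ Ψ y w) q v = fderiv ℝ (fun y => fderiv ℝ Ψ y v) q w := by
  have hΦ : ContDiff ℝ (⊤ : ℕ∞) (fderiv ℝ Ψ) := hΨ.fderiv_right (by simp)
  have hd : DifferentiableAt ℝ (fderiv ℝ Ψ) q := (hΦ.differentiable (by simp)) q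
  have key : ∀ a : E, fderiv ℝ (fun y => fderiv ℝ Ψ y a) q =
      (fderiv ℝ (fderiv ℝ Ψ) q).flip a := by
    intro a
    have h2 := fderiv_clm_apply (c := fderiv ℝ Ψ) (u := fun _ => a) hd (differentiableAt_const a)
    simpa using h2
  rw [key, key]
  exact (hΨ.contDiffAt.isSymmSndFDerivAt (by rw [minSmoothness_of_isRCLikeNormedField]; exact WithTop.coe_le_coe.mpr (le_top : (2 : ℕ∞) ≤ ⊤))) v w

/-- Derivative of `F1 - φ * θ`, evaluated at a vector. -/
lemma fderiv_sub_mul_apply {E : Type*} [NormedAddCommGroup E] [NormedSpace ℝ E]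
    (F1 φ θ : E → ℝ) (q v : E) (d1 : DifferentiableAt ℝ F1 q)
    (dφ : DifferentiableAt ℝ φ q) (dθ : DifferentiableAt ℝ θ q) :
    fderiv ℝ (fun y => F1 y - φ y * θ y) q v =
      fderiv ℝ F1 q v - (φ q * fderiv ℝ θ q v + θ q * fderiv ℝ φ q v) := by
  rw [fderiv_fun_sub (g := fun y => φ y * θ y) d1 (dφ.mul dθ), fderiv_fun_mul dφ dθ]
  simp

/-- if `∇²f = h·Id`, then at any `q` with `∇f(q) ≠ 0` and any unit
`z ⟂ ∇f(q)`, the sectional curvature of the plane spanned by `∇f(q)` and `z`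
equals `-⟨∇f, ∇h⟩(q)/|∇f(q)|²`, independently of `z`. -/
theorem stmt_6 {E : Type*} [NormedAddCommGroup E] [NormedSpace ℝ E]
    (g : E → E → E → ℝ) (D : (E → E) → (E → E) → (E → E))
    (hg : IsMetric g) (hD : IsLeviCivita g D)
    (f h : E → ℝ) (G : E → E) (hf : ContDiff ℝ (⊤ : ℕ∞) f) (hh : ContDiff ℝ (⊤ : ℕ∞) h)
    (hG : ContDiff ℝ (⊤ : ℕ∞) G) (hgrad : IsGradient g f G)
    (hconf : ∀ (u : E) (x : E), D (VConst u) G x = h x • u)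
    (q : E) (hq : G q ≠ 0)
    (z : E) (hz : g q z z = 1) (hzperp : g q (G q) z = 0) :
    secCurv g D q (G q) z = -(fderiv ℝ h q (G q)) / g q (G q) (G q) := by
  have hcU : ContDiff ℝ (⊤ : ℕ∞) (VConst (G q)) := contDiff_const
  have hcZ : ContDiff ℝ (⊤ : ℕ∞) (VConst z) := contDiff_const
  have hDZZ : ContDiff ℝ (⊤ : ℕ∞) (D (VConst z) (VConst z)) := hD.smooth _ _ hcZ hcZ
  have hDUZ : ContDiff ℝ (⊤ : ℕ∞) (D (VConst (G q)) (VConst z)) := hD.smooth _ _ hcU hcZ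
  -- metric helpers
  have gsmul_r : ∀ x (a : ℝ) v w, g x v (a • w) = a * g x v w := by
    intro x a v w; rw [hg.symm, hg.smul_left, hg.symm]
  have gsub : ∀ x u v w, g x (u - v) w = g x u w - g x v w := by
    intro x u v w
    calc g x (u - v) w = g x (u + (-1 : ℝ) • v) w := by rw [sub_eq_add_neg, neg_one_smul]
    _ = g x u w + g x ((-1 : ℝ) • v) w := hg.add_left x u _ w
    _ = g x u w + (-1) * g x v w := by rw [hg.smul_left]
    _ = g x u w - g x v w := by ring
  have g0 : ∀ x w, g x (0 : E) w = 0 := by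
    intro x w
    have h0 := hg.smul_left x 0 0 w
    simpa using h0
  -- bracket of constant fields vanishes
  have hbr : bracketVF (VConst (G q)) (VConst z) = fun _ => (0 : E) := by
    funext x
    show fderiv ℝ (fun _ : E => z) x (G q) - fderiv ℝ (fun _ : E => G q) x z = (0 : E)
    simp
  have hD0 : D (fun _ => (0 : E)) (VConst z) = fun _ => (0 : E) := by
    have ht := hD.tensor_left (fun _ => (0 : ℝ)) (VConst (0 : E)) (VConst z)
      contDiff_const contDiff_const hcZ
    have e : (fun x => (0 : ℝ) • (VConst (0 : E)) x) = (fun _ : E => (0 : E)) := by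
      funext x; simp [VConst]
    rw [e] at ht
    rw [ht]; funext x; simp
  -- torsion-freeness for constant fields
  have htor : ∀ x, D (VConst z) (VConst (G q)) x = D (VConst (G q)) (VConst z) x := by
    have hs := hD.torsion_free (VConst (G q)) (VConst z) hcU hcZ
    rw [hbr] at hs
    intro x
    have hx := congrFun hs x
    simp only [Pi.sub_apply] at hx
    exact (sub_eq_zero.mp hx).symm
  -- the function ψ = df(·)(z) is smooth
  have hΨ : ContDiff ℝ (⊤ : ℕ∞) (fun y => fderiv ℝ f y z) :=
    (hf.fderiv_right (by simp)).clm_apply contDiff_const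
  have hfun : (fun x => g x (VConst z x) (G x)) = (fun y => fderiv ℝ f y z) := by
    funext x
    rw [VConst_apply, hg.symm]
    exact hgrad x z
  -- e1 : expression for g(D_Z Z, G)
  have e1 : ∀ y, g y (D (VConst z) (VConst z) y) (G y) =
      fderiv ℝ (fun y => fderiv ℝ f y z) y z - h y * g y z z := by
    intro y
    have hc := hD.compat (VConst z) (VConst z) G hcZ hcZ hG y
    rw [hfun] at hc
    simp only [VConst_apply] at hc
    rw [hconf, gsmul_r] at hc
    linarith
  -- e2 : expression for g(D_U Z, G)
  have e2 : ∀ y, g y (D (VConst (G q)) (VConst z) y) (G y) =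
      fderiv ℝ (fun y => fderiv ℝ f y z) y (G q) - h y * g y z (G q) := by
    intro y
    have hc := hD.compat (VConst (G q)) (VConst z) G hcU hcZ hG y
    rw [hfun] at hc
    simp only [VConst_apply] at hc
    rw [hconf, gsmul_r] at hc
    linarith
  -- derivative of g(z,z)
  have eθ : fderiv ℝ (fun y => g y z z) q (G q) =
      2 * g q (D (VConst (G q)) (VConst z) q) z := by
    have hc := hD.compat (VConst (G q)) (VConst z) (VConst z) hcU hcZ hcZ q
    simp only [VConst_apply] at hc
    have hsy := hg.symm q z (D (VConst (G q)) (VConst z) q)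
    linarith
  -- derivative of g(z, G q) in direction z
  have eψz : fderiv ℝ (fun y => g y z (G q)) q z =
      g q (D (VConst z) (VConst z) q) (G q) + g q (D (VConst (G q)) (VConst z) q) z := by
    have hc := hD.compat (VConst z) (VConst z) (VConst (G q)) hcZ hcZ hcU q
    simp only [VConst_apply] at hc
    rw [htor] at hc
    have hsy := hg.symm q z (D (VConst (G q)) (VConst z) q)
    linarith
  -- differentiability facts
  have hΨ1 : ContDiff ℝ (⊤ : ℕ∞) (fun y => fderiv ℝ (fun y => fderiv ℝ f y z) y z) :=
    (hΨ.fderiv_right (by simp)).clm_apply contDiff_const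
  have hΨ2 : ContDiff ℝ (⊤ : ℕ∞) (fun y => fderiv ℝ (fun y => fderiv ℝ f y z) y (G q)) :=
    (hΨ.fderiv_right (by simp)).clm_apply contDiff_const
  have dh' : DifferentiableAt ℝ h q := (hh.differentiable (by simp)) q
  have dgzz : DifferentiableAt ℝ (fun y => g y z z) q :=
    ((hg.smooth z z).differentiable (by simp)) q
  have dgzG : DifferentiableAt ℝ (fun y => g y z (G q)) q :=
    ((hg.smooth z (G q)).differentiable (by simp)) q
  -- A computation
  have hA := hD.compat (VConst (G q)) (D (VConst z) (VConst z)) G hcU hDZZ hG q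
  simp only [VConst_apply] at hA
  rw [hconf, gsmul_r] at hA
  have hfunA : (fun x => g x (D (VConst z) (VConst z) x) (G x)) =
      (fun y => fderiv ℝ (fun y => fderiv ℝ f y z) y z - h y * g y z z) := funext e1
  rw [hfunA] at hA
  have hsplitA : fderiv ℝ
      (fun y => fderiv ℝ (fun y => fderiv ℝ f y z) y z - h y * g y z z) q (G q) =
      fderiv ℝ (fun y => fderiv ℝ (fun y => fderiv ℝ f y z) y z) q (G q) -
        (h q * fderiv ℝ (fun y => g y z z) q (G q) + g q z z * fderiv ℝ h q (G q)) :=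
    fderiv_sub_mul_apply _ _ _ q (G q) ((hΨ1.differentiable (by simp)) q) dh' dgzz
  rw [hsplitA] at hA
  -- B computation
  have hB := hD.compat (VConst z) (D (VConst (G q)) (VConst z)) G hcZ hDUZ hG q
  simp only [VConst_apply] at hB
  rw [hconf, gsmul_r] at hB
  have hfunB : (fun x => g x (D (VConst (G q)) (VConst z) x) (G x)) =
      (fun y => fderiv ℝ (fun y => fderiv ℝ f y z) y (G q) - h y * g y z (G q)) := funext e2
  rw [hfunB] at hB
  have hsplitB : fderiv ℝ
      (fun y => fderiv ℝ (fun y => fderiv ℝ f y z) y (G q) - h y * g y z (G q)) q z =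
      fderiv ℝ (fun y => fderiv ℝ (fun y => fderiv ℝ f y z) y (G q)) q z -
        (h q * fderiv ℝ (fun y => g y z (G q)) q z + g q z (G q) * fderiv ℝ h q z) :=
    fderiv_sub_mul_apply _ _ _ q z ((hΨ2.differentiable (by simp)) q) dh' dgzG
  rw [hsplitB] at hB
  -- Clairaut
  have hsym : fderiv ℝ (fun y => fderiv ℝ (fun y => fderiv ℝ f y z) y z) q (G q) =
      fderiv ℝ (fun y => fderiv ℝ (fun y => fderiv ℝ f y z) y (G q)) q z :=
    clairaut_aux _ hΨ q (G q) z
  -- the numerator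
  have hsymperp : g q z (G q) = 0 := by rw [hg.symm]; exact hzperp
  have hnum : g q (curv D (VConst (G q)) (VConst z) (VConst z) q) (G q) =
      -(fderiv ℝ h q (G q)) := by
    have hcurv : curv D (VConst (G q)) (VConst z) (VConst z) q =
        D (VConst (G q)) (D (VConst z) (VConst z)) q -
          D (VConst z) (D (VConst (G q)) (VConst z)) q -
          D (bracketVF (VConst (G q)) (VConst z)) (VConst z) q := rfl
    rw [hcurv, hbr, hD0, gsub, gsub, g0]
    simp only [hz, hsymperp, eθ, eψz, hsym] at hA hB
    nlinarith [hA, hB]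
  show g q (curv D (VConst (G q)) (VConst z) (VConst z) q) (G q) /
      (g q (G q) (G q) * g q z z - (g q (G q) z) ^ 2) = _
  rw [hnum, hz, hzperp]
  norm_num
end
end

section
/- Let $f$ be a smooth function on a Riemannian manifold with $\nabla^2 f = h\,\mathrm{Id}$ for a smooth function $h$. Then $X(h)\,\nabla f = X(f)\,\nabla h$ for every vector field $X$; consequently, at any point $q$ with $\nabla f(q)\neq 0$, the gradient $\nabla h(q)$ is a scalar multiple of $\nabla f(q)$. -/
open scoped RealInnerProductSpace
noncomputable section

/-- if `∇²f = h·Id`, then `X(h) ∇f = X(f) ∇h` for every vector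
field `X`; consequently, wherever `∇f ≠ 0`, `∇h` is a scalar multiple of `∇f`. -/
lemma symm_aux' {E : Type*} [NormedAddCommGroup E] [NormedSpace ℝ E]
    {φ : E → ℝ} (hφ : ContDiff ℝ (⊤ : ℕ∞) φ) (x u v : E) :
    fderiv ℝ (fun y => fderiv ℝ φ y v) x u = fderiv ℝ (fun y => fderiv ℝ φ y u) x v := by
  have hdd : Differentiable ℝ (fderiv ℝ φ) :=
    (hφ.fderiv_right (m := 1) (WithTop.coe_le_coe.mpr (le_top : ((1 + 1 : ℕ) : ℕ∞) ≤ ⊤))).differentiable one_ne_zero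
  have hs : IsSymmSndFDerivAt ℝ φ x := hφ.contDiffAt.isSymmSndFDerivAt (by rw [minSmoothness_of_isRCLikeNormedField]; exact WithTop.coe_le_coe.mpr (le_top : (2 : ℕ∞) ≤ ⊤))
  have e : ∀ w z : E, fderiv ℝ (fun y => fderiv ℝ φ y w) x z
      = fderiv ℝ (fderiv ℝ φ) x z w := by
    intro w z
    rw [fderiv_clm_apply (hdd x) (differentiableAt_const w)]
    simp
  rw [e, e]
  exact hs u v


/-- proof below -/
theorem stmt_8 {E : Type*} [NormedAddCommGroup E] [NormedSpace ℝ E]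
    (g : E → E → E → ℝ) (D : (E → E) → (E → E) → (E → E))
    (hg : IsMetric g) (hD : IsLeviCivita g D)
    (f h : E → ℝ) (G Gh : E → E) (hf : ContDiff ℝ (⊤ : ℕ∞) f) (hh : ContDiff ℝ (⊤ : ℕ∞) h)
    (hG : ContDiff ℝ (⊤ : ℕ∞) G) (hgrad : IsGradient g f G) (hgradh : IsGradient g h Gh)
    (hconf : ∀ (u : E) (x : E), D (VConst u) G x = h x • u) :
    (∀ (X : E → E) (x : E), fderiv ℝ h x (X x) • G x = fderiv ℝ f x (X x) • Gh x) ∧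
    (∀ q, G q ≠ 0 → ∃ a : ℝ, Gh q = a • G q) := by
  have hVC : ∀ u : E, ContDiff ℝ (⊤ : WithTop ℕ∞) (VConst u) := fun u => contDiff_const
  set φ : E → ℝ := fun y => fderiv ℝ f y (G y) with hφdef
  have hφs : ContDiff ℝ (⊤ : ℕ∞) φ := (hf.fderiv_right (by simp)).clm_apply hG
  have hφeq : φ = fun y => g y (G y) (G y) := funext fun y => (hgrad y (G y)).symm
  have hdφ : ∀ x v, fderiv ℝ φ x v = 2 * (h x * fderiv ℝ f x v) := by
    intro x v
    have hc := hD.compat (VConst v) G G contDiff_const hG hG x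
    have e1 : g x (D (VConst v) G x) (G x) = h x * fderiv ℝ f x v := by
      rw [hconf, hg.smul_left, hg.symm x v (G x), hgrad]
    have e2 : g x (G x) (D (VConst v) G x) = h x * fderiv ℝ f x v := by
      rw [hg.symm, e1]
    have hvx : VConst v x = v := rfl
    rw [hφeq]
    rw [hvx] at hc
    rw [hc, e1, e2]; ring
  -- symmetry of dh ⊗ df
  have hψs : ∀ w : E, ContDiff ℝ (⊤ : ℕ∞) (fun y => fderiv ℝ f y w) :=
    fun w => (hf.fderiv_right (by simp)).clm_apply contDiff_const
  have hsym : ∀ x u v, fderiv ℝ h x u * fderiv ℝ f x v = fderiv ℝ h x v * fderiv ℝ f x u := by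
    intro x u v
    have hψfun : ∀ w : E, (fun y => fderiv ℝ φ y w) = fun y => 2 * (h y * fderiv ℝ f y w) :=
      fun w => funext fun y => hdφ y w
    have A := symm_aux' hφs x u v
    rw [hψfun u, hψfun v] at A
    have d1 : DifferentiableAt ℝ h x := (hh.differentiable (by simp)).differentiableAt
    have B : ∀ (w z : E), fderiv ℝ (fun y => 2 * (h y * fderiv ℝ f y w)) x z
        = 2 * (fderiv ℝ h x z * fderiv ℝ f x w
            + h x * fderiv ℝ (fun y => fderiv ℝ f y w) x z) := by
      intro w z
      have d2 : DifferentiableAt ℝ (fun y => fderiv ℝ f y w) x :=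
        ((hψs w).differentiable (by simp)).differentiableAt
      have d3 : DifferentiableAt ℝ (fun y => h y * fderiv ℝ f y w) x := d1.mul d2
      have d4 : fderiv ℝ (fun y => h y * fderiv ℝ f y w) x
          = h x • fderiv ℝ (fun y => fderiv ℝ f y w) x + fderiv ℝ f x w • fderiv ℝ h x :=
        fderiv_mul d1 d2
      rw [fderiv_const_mul d3, d4]
      simp
      ring
    rw [B, B] at A
    have C := symm_aux' hf x u v
    rw [C] at A
    linarith
  have key : ∀ x u, fderiv ℝ h x u • G x = fderiv ℝ f x u • Gh x := by
    intro x u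
    set w : E := fderiv ℝ h x u • G x - fderiv ℝ f x u • Gh x with hw
    have hz : ∀ v, g x w v = 0 := by
      intro v
      have : g x w v = fderiv ℝ h x u * g x (G x) v - fderiv ℝ f x u * g x (Gh x) v := by
        rw [hw, sub_eq_add_neg, ← neg_smul, hg.add_left, hg.smul_left, hg.smul_left]
        ring
      rw [this, hgrad, hgradh]
      have := hsym x u v
      linarith
    have hw0 : w = 0 := by
      by_contra hne
      exact (hg.posdef x w hne).ne' (hz w)
    exact sub_eq_zero.mp hw0
  refine ⟨fun X x => key x (X x), fun q hq => ?_⟩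
  have hpos : 0 < fderiv ℝ f q (G q) := by
    rw [← hgrad]; exact hg.posdef q _ hq
  refine ⟨fderiv ℝ h q (G q) / fderiv ℝ f q (G q), ?_⟩
  have hk := key q (G q)
  rw [div_eq_inv_mul, mul_smul, hk, smul_smul, inv_mul_cancel₀ hpos.ne', one_smul]
end
end

section
/- Let $(M^2,g)$ be a Riemannian surface with Gauss curvature $K$, and $f,h$ smooth functions with $\nabla^2 f = h\,\mathrm{Id}$. Then on the set where $\nabla f \neq 0$, one has $\nabla h = -K\,\nabla f$. -/
open scoped RealInnerProductSpace
noncomputable section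

/-- The Gauss curvature of a metric on a 2-dimensional chart. -/
def gaussK (g : EuclideanSpace ℝ (Fin 2) → EuclideanSpace ℝ (Fin 2) → EuclideanSpace ℝ (Fin 2) → ℝ)
    (D : (EuclideanSpace ℝ (Fin 2) → EuclideanSpace ℝ (Fin 2)) →
      (EuclideanSpace ℝ (Fin 2) → EuclideanSpace ℝ (Fin 2)) →
      (EuclideanSpace ℝ (Fin 2) → EuclideanSpace ℝ (Fin 2)))
    (x : EuclideanSpace ℝ (Fin 2)) : ℝ :=
  secCurv g D x (EuclideanSpace.single 0 1) (EuclideanSpace.single 1 1)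

local notation "E2" => EuclideanSpace ℝ (Fin 2)

namespace Aux

def ee (i : Fin 2) : E2 := EuclideanSpace.single i 1

lemma decomp (w : E2) : w = w 0 • ee 0 + w 1 • ee 1 := by
  ext i
  fin_cases i <;> simp [ee, EuclideanSpace.single_apply]

lemma ee_ne (i : Fin 2) : ee i ≠ 0 := fun h => by
  simpa [ee, EuclideanSpace.single_apply] using congrArg (fun v : E2 => v i) h

variable {g : E2 → E2 → E2 → ℝ} {D : (E2 → E2) → (E2 → E2) → (E2 → E2)}

section Metric
variable (hg : IsMetric g)
include hg

lemma g_add_right (x u v w) : g x u (v + w) = g x u v + g x u w := by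
  rw [hg.symm, hg.add_left, hg.symm, hg.symm x w u]

lemma g_smul_right (x u) (a : ℝ) (v) : g x u (a • v) = a * g x u v := by
  rw [hg.symm, hg.smul_left, hg.symm]

lemma g_sub_left (x u v w) : g x (u - v) w = g x u w - g x v w := by
  have : u - v = u + (-1 : ℝ) • v := by module
  rw [this, hg.add_left, hg.smul_left]; ring

lemma g_sub_right (x u v w) : g x u (v - w) = g x u v - g x u w := by
  rw [hg.symm, g_sub_left hg, hg.symm, hg.symm x w u]

lemma gexp1 (x w z) : g x w z = w 0 * g x (ee 0) z + w 1 * g x (ee 1) z := by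
  conv_lhs => rw [decomp w]
  rw [hg.add_left, hg.smul_left, hg.smul_left]

lemma gexp (x w z : E2) :
    g x w z = w 0 * (z 0 * g x (ee 0) (ee 0) + z 1 * g x (ee 1) (ee 0)) +
      w 1 * (z 0 * g x (ee 0) (ee 1) + z 1 * g x (ee 1) (ee 1)) := by
  rw [gexp1 hg x w z, hg.symm x (ee 0) z, hg.symm x (ee 1) z,
    gexp1 hg x z (ee 0), gexp1 hg x z (ee 1)]

lemma gsmooth {A B : E2 → E2} (hA : ContDiff ℝ (⊤ : ℕ∞) A) (hB : ContDiff ℝ (⊤ : ℕ∞) B) :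
    ContDiff ℝ (⊤ : ℕ∞) (fun y => g y (A y) (B y)) := by
  have hc : ∀ (C : E2 → E2), ContDiff ℝ (⊤ : ℕ∞) C → ∀ i, ContDiff ℝ (⊤ : ℕ∞) (fun y => C y i) :=
    fun C hC i => (EuclideanSpace.proj (𝕜 := ℝ) i).contDiff.comp hC
  have : (fun y => g y (A y) (B y)) = fun y =>
      A y 0 * (B y 0 * g y (ee 0) (ee 0) + B y 1 * g y (ee 1) (ee 0)) +
      A y 1 * (B y 0 * g y (ee 0) (ee 1) + B y 1 * g y (ee 1) (ee 1)) :=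
    funext fun y => gexp hg y (A y) (B y)
  rw [this]
  exact ((hc A hA 0).mul (((hc B hB 0).mul (hg.smooth _ _)).add
      ((hc B hB 1).mul (hg.smooth _ _)))).add
    ((hc A hA 1).mul (((hc B hB 0).mul (hg.smooth _ _)).add
      ((hc B hB 1).mul (hg.smooth _ _))))

end Metric

lemma bracket_const (u v : E2) : bracketVF (VConst u) (VConst v) = VConst (0 : E2) := by
  funext x
  have h1 : fderiv ℝ (VConst u) x = 0 := fderiv_const_apply u
  have h2 : fderiv ℝ (VConst v) x = 0 := fderiv_const_apply v
  simp [bracketVF, h1, h2, VConst]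

section LC
variable (hD : IsLeviCivita g D)
include hD

lemma D_vconst_zero {W : E2 → E2} (hW : ContDiff ℝ (⊤ : ℕ∞) W) : D (VConst (0 : E2)) W = 0 := by
  have h1 : (fun x : E2 => (0 : ℝ) • (VConst (0 : E2)) x) = VConst (0 : E2) := by
    funext x; simp [VConst]
  have h2 := hD.tensor_left (fun _ => (0 : ℝ)) (VConst (0 : E2)) W contDiff_const
    contDiff_const hW
  rw [h1] at h2
  rw [h2]; funext x; simp

lemma curv_const {Z : E2 → E2} (hZ : ContDiff ℝ (⊤ : ℕ∞) Z) (u v : E2) (x : E2) :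
    curv D (VConst u) (VConst v) Z x =
      D (VConst u) (D (VConst v) Z) x - D (VConst v) (D (VConst u) Z) x := by
  simp only [curv, bracket_const, D_vconst_zero hD hZ, Pi.sub_apply, Pi.zero_apply, sub_zero]

variable (hg : IsMetric g)
include hg

lemma deriv_g (v : E2) {W Z : E2 → E2} (hW : ContDiff ℝ (⊤ : ℕ∞) W) (hZ : ContDiff ℝ (⊤ : ℕ∞) Z) (x : E2) :
    fderiv ℝ (fun y => g y (W y) (Z y)) x v =
      g x (D (VConst v) W x) (Z x) + g x (W x) (D (VConst v) Z x) := by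
  simpa [VConst] using hD.compat (VConst v) W Z contDiff_const hW hZ x

lemma skewWZ (u v : E2) {W Z : E2 → E2} (hW : ContDiff ℝ (⊤ : ℕ∞) W) (hZ : ContDiff ℝ (⊤ : ℕ∞) Z) (x : E2) :
    g x (curv D (VConst u) (VConst v) W x) (Z x) +
      g x (W x) (curv D (VConst u) (VConst v) Z x) = 0 := by
  set φ := fun y => g y (W y) (Z y) with hφdef
  have hφ : ContDiff ℝ (⊤ : ℕ∞) φ := gsmooth hg hW hZ
  have hDW : ∀ b : E2, ContDiff ℝ (⊤ : ℕ∞) (D (VConst b) W) := fun b =>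
    hD.smooth _ _ contDiff_const hW
  have hDZ : ∀ b : E2, ContDiff ℝ (⊤ : ℕ∞) (D (VConst b) Z) := fun b =>
    hD.smooth _ _ contDiff_const hZ
  have key : ∀ a b : E2, fderiv ℝ (fun y => fderiv ℝ φ y b) x a =
      g x (D (VConst a) (D (VConst b) W) x) (Z x) +
      g x (D (VConst b) W x) (D (VConst a) Z x) +
      (g x (D (VConst a) W x) (D (VConst b) Z x) +
       g x (W x) (D (VConst a) (D (VConst b) Z) x)) := by
    intro a b
    have e1 : (fun y => fderiv ℝ φ y b) =
        fun y => g y (D (VConst b) W y) (Z y) + g y (W y) (D (VConst b) Z y) :=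
      funext fun y => deriv_g hD hg b hW hZ y
    rw [e1]
    have d1 : DifferentiableAt ℝ (fun y => g y (D (VConst b) W y) (Z y)) x :=
      ((gsmooth hg (hDW b) hZ).differentiable (by simp)).differentiableAt
    have d2 : DifferentiableAt ℝ (fun y => g y (W y) (D (VConst b) Z y)) x :=
      ((gsmooth hg hW (hDZ b)).differentiable (by simp)).differentiableAt
    rw [fderiv_fun_add d1 d2]
    rw [ContinuousLinearMap.add_apply]
    rw [deriv_g hD hg a (hDW b) hZ x, deriv_g hD hg a hW (hDZ b) x]
  have hd1 : ContDiff ℝ (⊤ : ℕ∞) (fderiv ℝ φ) := hφ.fderiv_right (by simp)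
  have hsym : fderiv ℝ (fderiv ℝ φ) x u v = fderiv ℝ (fderiv ℝ φ) x v u :=
    second_derivative_symmetric (fun y => (hφ.differentiable (by simp) y).hasFDerivAt)
      ((hd1.differentiable (by simp) x).hasFDerivAt) u v
  have conv : ∀ b a : E2, fderiv ℝ (fun y => fderiv ℝ φ y b) x a =
      fderiv ℝ (fderiv ℝ φ) x a b := by
    intro b a
    rw [fderiv_clm_apply ((hd1.differentiable (by simp) x)) (differentiableAt_const b)]
    simp
  have main : fderiv ℝ (fun y => fderiv ℝ φ y v) x u =
      fderiv ℝ (fun y => fderiv ℝ φ y u) x v := by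
    rw [conv, conv, hsym]
  rw [key u v, key v u] at main
  rw [curv_const hD hW u v x, curv_const hD hZ u v x, g_sub_left hg, g_sub_right hg]
  linarith

end LC

end Aux

namespace Aux2
open Aux

variable {g : E2 → E2 → E2 → ℝ} {D : (E2 → E2) → (E2 → E2) → (E2 → E2)}

lemma curvG (hD : IsLeviCivita g D) {h : E2 → ℝ} {G : E2 → E2}
    (hh : ContDiff ℝ (⊤ : ℕ∞) h) (hG : ContDiff ℝ (⊤ : ℕ∞) G)
    (hconf : ∀ u x, D (VConst u) G x = h x • u) (u v x : E2) :
    curv D (VConst u) (VConst v) G x = fderiv ℝ h x u • v - fderiv ℝ h x v • u := by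
  have hvG : D (VConst v) G = fun y => h y • VConst v y := funext fun y => hconf v y
  have huG : D (VConst u) G = fun y => h y • VConst u y := funext fun y => hconf u y
  have lu := hD.leibniz h (VConst u) (VConst v) hh contDiff_const contDiff_const
  have lv := hD.leibniz h (VConst v) (VConst u) hh contDiff_const contDiff_const
  have ht := hD.torsion_free (VConst u) (VConst v) contDiff_const contDiff_const
  rw [bracket_const] at ht
  have hcomm : D (VConst u) (VConst v) x = D (VConst v) (VConst u) x := by
    have h1 := congrFun ht x
    simp only [Pi.sub_apply, VConst] at h1
    exact sub_eq_zero.mp h1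
  rw [curv_const hD hG u v x, hvG, huG, lu, lv]
  simp only [VConst]
  rw [hcomm]
  abel

lemma gamma_pos (hg : IsMetric g) (x : E2) :
    0 < g x (ee 0) (ee 0) * g x (ee 1) (ee 1) - g x (ee 0) (ee 1) ^ 2 := by
  set g00 := g x (ee 0) (ee 0) with hg00
  set g01 := g x (ee 0) (ee 1) with hg01
  set g11 := g x (ee 1) (ee 1) with hg11
  have h00 : 0 < g00 := hg.posdef x (ee 0) (ee_ne 0)
  set w : E2 := g01 • ee 0 - g00 • ee 1 with hw
  have hw0 : w 0 = g01 := by simp [hw, ee, EuclideanSpace.single_apply]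
  have hw1 : w 1 = -g00 := by simp [hw, ee, EuclideanSpace.single_apply]
  have hwne : w ≠ 0 := by
    intro hc
    have h1 : w 1 = 0 := by rw [hc]; rfl
    rw [hw1] at h1
    linarith
  have hww := hg.posdef x w hwne
  have hexp := gexp hg x w w
  rw [hw0, hw1, hg.symm x (ee 1) (ee 0)] at hexp
  nlinarith

end Aux2

/-- on a Riemannian surface with Gauss curvature `K`, if
`∇²f = h·Id` then `∇h = -K ∇f` on the set where `∇f ≠ 0`. -/
theorem stmt_9
    (g : EuclideanSpace ℝ (Fin 2) → EuclideanSpace ℝ (Fin 2) → EuclideanSpace ℝ (Fin 2) → ℝ)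
    (D : (EuclideanSpace ℝ (Fin 2) → EuclideanSpace ℝ (Fin 2)) →
      (EuclideanSpace ℝ (Fin 2) → EuclideanSpace ℝ (Fin 2)) →
      (EuclideanSpace ℝ (Fin 2) → EuclideanSpace ℝ (Fin 2)))
    (hg : IsMetric g) (hD : IsLeviCivita g D)
    (f h : EuclideanSpace ℝ (Fin 2) → ℝ)
    (G Gh : EuclideanSpace ℝ (Fin 2) → EuclideanSpace ℝ (Fin 2))
    (hf : ContDiff ℝ (⊤ : ℕ∞) f) (hh : ContDiff ℝ (⊤ : ℕ∞) h) (hG : ContDiff ℝ (⊤ : ℕ∞) G)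
    (hgrad : IsGradient g f G) (hgradh : IsGradient g h Gh)
    (hconf : ∀ (u x : EuclideanSpace ℝ (Fin 2)), D (VConst u) G x = h x • u) :
    ∀ x, G x ≠ 0 → Gh x = -(gaussK g D x) • G x := by
  intro x _
  have sk : ∀ (W Z : E2 → E2), ContDiff ℝ (⊤ : ℕ∞) W → ContDiff ℝ (⊤ : ℕ∞) Z →
      g x (curv D (VConst (Aux.ee 0)) (VConst (Aux.ee 1)) W x) (Z x) +
        g x (W x) (curv D (VConst (Aux.ee 0)) (VConst (Aux.ee 1)) Z x) = 0 :=
    fun W Z hW hZ => Aux.skewWZ hD hg _ _ hW hZ x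
  set e0 : E2 := Aux.ee 0 with he0
  set e1 : E2 := Aux.ee 1 with he1
  set A : E2 := curv D (VConst e0) (VConst e1) (VConst e0) x with hAdef
  set B : E2 := curv D (VConst e0) (VConst e1) (VConst e1) x with hBdef
  set g00 := g x e0 e0 with hg00
  set g01 := g x e0 e1 with hg01
  set g11 := g x e1 e1 with hg11
  set κ := g x B e0 with hκ
  set a := G x 0 with ha
  set b := G x 1 with hb
  set p := fderiv ℝ h x e0 with hp
  set q := fderiv ℝ h x e1 with hq
  have hγpos : 0 < g00 * g11 - g01 ^ 2 := Aux2.gamma_pos hg x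
  have hγne : g00 * g11 - g01 ^ 2 ≠ 0 := ne_of_gt hγpos
  have hK : gaussK g D x = κ / (g00 * g11 - g01 ^ 2) := rfl
  -- skew-symmetry facts
  have s1 : g x A e0 + g x e0 A = 0 := sk (VConst e0) (VConst e0) contDiff_const contDiff_const
  have hA0 : g x A e0 = 0 := by have := hg.symm x e0 A; linarith
  have s2 : g x A e1 + g x e0 B = 0 := sk (VConst e0) (VConst e1) contDiff_const contDiff_const
  have hA1 : g x A e1 = -κ := by have := hg.symm x e0 B; linarith
  have s3 : g x B e1 + g x e1 B = 0 := sk (VConst e1) (VConst e1) contDiff_const contDiff_const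
  have hB1 : g x B e1 = 0 := by have := hg.symm x e1 B; linarith
  -- curvature applied to the gradient
  have hcg : curv D (VConst e0) (VConst e1) G x = p • e1 - q • e0 :=
    Aux2.curvG hD hh hG hconf e0 e1 x
  have s4 : g x (curv D (VConst e0) (VConst e1) G x) e0 + g x (G x) A = 0 :=
    sk G (VConst e0) hG contDiff_const
  have s5 : g x (curv D (VConst e0) (VConst e1) G x) e1 + g x (G x) B = 0 :=
    sk G (VConst e1) hG contDiff_const
  rw [hcg] at s4 s5
  have ex4 : g x (p • e1 - q • e0) e0 = p * g01 - q * g00 := by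
    rw [Aux.g_sub_left hg, hg.smul_left, hg.smul_left, hg.symm x e1 e0]
  have ex5 : g x (p • e1 - q • e0) e1 = p * g11 - q * g01 := by
    rw [Aux.g_sub_left hg, hg.smul_left, hg.smul_left]
  have exGA : g x (G x) A = -(b * κ) := by
    rw [Aux.gexp1 hg x (G x) A, hg.symm x e0 A, hg.symm x e1 A, hA0, hA1]
    ring
  have exGB : g x (G x) B = a * κ := by
    rw [Aux.gexp1 hg x (G x) B, hg.symm x e0 B, hg.symm x e1 B, hκ, hB1]
    ring
  rw [ex4, exGA] at s4
  rw [ex5, exGB] at s5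
  -- solve the linear system
  have hpγ : p * (g00 * g11 - g01 ^ 2) = -(κ * (a * g00 + b * g01)) := by
    linear_combination (-g01) * s4 + g00 * s5
  have hqγ : q * (g00 * g11 - g01 ^ 2) = -(κ * (a * g01 + b * g11)) := by
    linear_combination (-g11) * s4 + g01 * s5
  -- conclude
  set K := κ / (g00 * g11 - g01 ^ 2) with hKdef
  set v : E2 := Gh x + K • G x with hv
  have hGe0 : g x (G x) e0 = a * g00 + b * g01 := by
    rw [Aux.gexp1 hg x (G x) e0, hg.symm x e1 e0]
  have hGe1 : g x (G x) e1 = a * g01 + b * g11 := by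
    rw [Aux.gexp1 hg x (G x) e1]
  have hv0 : g x v e0 = 0 := by
    rw [hv, hKdef, hg.add_left, hg.smul_left, hgradh x e0, hGe0, ← hp]
    field_simp
    linear_combination hpγ
  have hv1 : g x v e1 = 0 := by
    rw [hv, hKdef, hg.add_left, hg.smul_left, hgradh x e1, hGe1, ← hq]
    field_simp
    linear_combination hqγ
  have hvz : v = 0 := by
    by_contra hne
    have hpos := hg.posdef x v hne
    have : g x v v = 0 := by
      rw [Aux.gexp1 hg x v v, hg.symm x e0 v, hg.symm x e1 v, hv0, hv1]
      ring
    linarith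
  have : Gh x = -(K • G x) := eq_neg_of_add_eq_zero_left hvz
  rw [this, hK]
  exact (neg_smul K (G x)).symm
end
end

section
/- Let $(M^2,g)$ be a Riemannian surface with Gauss curvature $K$, and $f,h$ smooth with $\nabla^2 f = h\,\mathrm{Id}$ and $\nabla h = -K\nabla f$. Then $X(K)\,\nabla f = X(f)\,\nabla K$ for every vector field $X$; hence at each point $q$ with $\nabla f(q)\neq 0$, $\nabla K(q)$ is collinear with $\nabla f(q)$. -/
open scoped RealInnerProductSpace
noncomputable section

local notation "E2" => EuclideanSpace ℝ (Fin 2)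

lemma IsMetric.nondeg {E : Type*} [NormedAddCommGroup E] [NormedSpace ℝ E]
    {g : E → E → E → ℝ} (hg : IsMetric g) (x w : E) (hw : ∀ v, g x w v = 0) :
    w = 0 := by
  by_contra h0
  exact (hg.posdef x w h0).ne' (hw w)

/-- on a Riemannian surface with Gauss curvature `K`, if
`∇²f = h·Id` and `∇h = -K ∇f`, then `X(K) ∇f = X(f) ∇K` for every vector field
`X`; hence wherever `∇f ≠ 0`, `∇K` is collinear with `∇f`. -/
theorem stmt_10
    (g : EuclideanSpace ℝ (Fin 2) → EuclideanSpace ℝ (Fin 2) → EuclideanSpace ℝ (Fin 2) → ℝ)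
    (D : (EuclideanSpace ℝ (Fin 2) → EuclideanSpace ℝ (Fin 2)) →
      (EuclideanSpace ℝ (Fin 2) → EuclideanSpace ℝ (Fin 2)) →
      (EuclideanSpace ℝ (Fin 2) → EuclideanSpace ℝ (Fin 2)))
    (hg : IsMetric g) (hD : IsLeviCivita g D)
    (f h : EuclideanSpace ℝ (Fin 2) → ℝ)
    (G Gh GK : EuclideanSpace ℝ (Fin 2) → EuclideanSpace ℝ (Fin 2))
    (hf : ContDiff ℝ (⊤ : ℕ∞) f) (hh : ContDiff ℝ (⊤ : ℕ∞) h) (hG : ContDiff ℝ (⊤ : ℕ∞) G)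
    (hgrad : IsGradient g f G) (hgradh : IsGradient g h Gh)
    (hgradK : IsGradient g (fun x => gaussK g D x) GK)
    (hconf : ∀ (u x : EuclideanSpace ℝ (Fin 2)), D (VConst u) G x = h x • u)
    (hKh : ∀ x, Gh x = -(gaussK g D x) • G x) :
    (∀ (X : EuclideanSpace ℝ (Fin 2) → EuclideanSpace ℝ (Fin 2)) (x : EuclideanSpace ℝ (Fin 2)),
      fderiv ℝ (fun y => gaussK g D y) x (X x) • G x = fderiv ℝ f x (X x) • GK x) ∧
    (∀ q, G q ≠ 0 → ∃ a : ℝ, GK q = a • G q) := by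
  classical
  have hV : ∀ u : E2, ContDiff ℝ (⊤ : ℕ∞) (VConst u) := fun u => contDiff_const
  have gsmulr : ∀ (x : E2) (t : ℝ) (u v : E2), g x u (t • v) = t * g x u v := by
    intro x t u v; rw [hg.symm, hg.smul_left, hg.symm]
  have gsubl : ∀ (x u v w : E2), g x (u - v) w = g x u w - g x v w := by
    intro x u v w
    have hsub : u - v = u + (-1 : ℝ) • v := by simp [sub_eq_add_neg]
    rw [hsub, hg.add_left, hg.smul_left]; ring
  have gsubr : ∀ (x u v w : E2), g x u (v - w) = g x u v - g x u w := by
    intro x u v w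
    rw [hg.symm, gsubl, hg.symm x v u, hg.symm x w u]
  -- bracket of constant fields vanishes
  have hbr : ∀ u v : E2, bracketVF (VConst u) (VConst v) = fun _ => (0 : E2) := by
    intro u v; funext x
    have h1 : fderiv ℝ (VConst v) x = 0 := fderiv_const_apply v
    have h2 : fderiv ℝ (VConst u) x = 0 := fderiv_const_apply u
    simp [bracketVF, h1, h2]
  have hDzero : ∀ Z : E2 → E2, ContDiff ℝ (⊤ : ℕ∞) Z → D (fun _ => (0 : E2)) Z = fun _ => (0 : E2) := by
    intro Z hZ
    have h0 : (fun x : E2 => (0 : ℝ) • Z x) = fun _ => (0 : E2) := by funext x; simp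
    have ht := hD.tensor_left (fun _ => (0 : ℝ)) Z Z contDiff_const hZ hZ
    rw [h0] at ht
    rw [ht]; funext x; simp
  set e0 : E2 := EuclideanSpace.single 0 1 with he0
  set e1 : E2 := EuclideanSpace.single 1 1 with he1
  set W : E2 → E2 := curv D (VConst e0) (VConst e1) (VConst e1) with hWdef
  have hWsmooth : ContDiff ℝ (⊤ : ℕ∞) W := by
    have h1 : ContDiff ℝ (⊤ : ℕ∞) (D (VConst e0) (D (VConst e1) (VConst e1))) :=
      hD.smooth _ _ (hV e0) (hD.smooth _ _ (hV e1) (hV e1))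
    have h2 : ContDiff ℝ (⊤ : ℕ∞) (D (VConst e1) (D (VConst e0) (VConst e1))) :=
      hD.smooth _ _ (hV e1) (hD.smooth _ _ (hV e0) (hV e1))
    have h3 : D (bracketVF (VConst e0) (VConst e1)) (VConst e1) = fun _ => (0 : E2) := by
      rw [hbr]; exact hDzero _ (hV e1)
    have hW2 : W = fun x => D (VConst e0) (D (VConst e1) (VConst e1)) x -
        D (VConst e1) (D (VConst e0) (VConst e1)) x := by
      funext x
      simp only [hWdef, curv, h3, Pi.sub_apply, sub_zero]
    rw [hW2]
    exact h1.sub h2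
  have hbasis : ∀ w : E2, w = w 0 • e0 + w 1 • e1 := by
    intro w
    ext i
    fin_cases i <;>
      simp [he0, he1, EuclideanSpace.single_apply]
  have geval : ∀ (x w u : E2), g x w u = w 0 * g x e0 u + w 1 * g x e1 u := by
    intro x w u
    calc g x w u = g x (w 0 • e0 + w 1 • e1) u := by rw [← hbasis w]
    _ = w 0 * g x e0 u + w 1 * g x e1 u := by rw [hg.add_left, hg.smul_left, hg.smul_left]
  have hcoord : ∀ i : Fin 2, ContDiff ℝ (⊤ : ℕ∞) (fun x => W x i) := by
    intro i
    exact (EuclideanSpace.proj (𝕜 := ℝ) i).contDiff.comp hWsmooth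
  have hnum : ContDiff ℝ (⊤ : ℕ∞) (fun x => g x (W x) e0) := by
    have hnum2 : (fun x => g x (W x) e0) = fun x => W x 0 * g x e0 e0 + W x 1 * g x e1 e0 := by
      funext x; exact geval x (W x) e0
    rw [hnum2]
    exact ((hcoord 0).mul (hg.smooth e0 e0)).add ((hcoord 1).mul (hg.smooth e1 e0))
  have hden : ContDiff ℝ (⊤ : ℕ∞) (fun x => g x e0 e0 * g x e1 e1 - g x e0 e1 ^ 2) :=
    ((hg.smooth e0 e0).mul (hg.smooth e1 e1)).sub ((hg.smooth e0 e1).pow 2)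
  have he1ne : e1 ≠ 0 := by
    intro hcon
    have h1 : e1 1 = 0 := by rw [hcon]; rfl
    rw [he1] at h1
    simp [EuclideanSpace.single_apply] at h1
  have hdenpos : ∀ x : E2, 0 < g x e0 e0 * g x e1 e1 - g x e0 e1 ^ 2 := by
    intro x
    have hcpos : 0 < g x e1 e1 := hg.posdef x e1 he1ne
    have hwne : g x e1 e1 • e0 - g x e0 e1 • e1 ≠ 0 := by
      intro hcon
      have h0 : (g x e1 e1 • e0 - g x e0 e1 • e1) 0 = g x e1 e1 := by
        simp [he0, he1, EuclideanSpace.single_apply]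
      rw [hcon] at h0
      have h0' : (0 : ℝ) = g x e1 e1 := h0
      exact hcpos.ne' h0'.symm
    have hpos := hg.posdef x _ hwne
    have hexp : g x (g x e1 e1 • e0 - g x e0 e1 • e1) (g x e1 e1 • e0 - g x e0 e1 • e1)
        = g x e1 e1 * (g x e0 e0 * g x e1 e1 - g x e0 e1 ^ 2) := by
      rw [gsubl, hg.smul_left, hg.smul_left, gsubr, gsubr, gsmulr, gsmulr, gsmulr, gsmulr,
        hg.symm x e1 e0]
      ring
    rw [hexp] at hpos
    nlinarith [hpos, hcpos]
  set K : E2 → ℝ := fun x => gaussK g D x with hKdef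
  have hKeq : K = fun x => g x (W x) e0 / (g x e0 e0 * g x e1 e1 - g x e0 e1 ^ 2) := rfl
  have hKsmooth : ContDiff ℝ (⊤ : ℕ∞) K := by
    rw [hKeq]
    exact hnum.div hden fun x => (hdenpos x).ne'
  have hGheq : Gh = fun y => (-(K y)) • G y := by
    funext y; exact hKh y
  have hGhsmooth : ContDiff ℝ (⊤ : ℕ∞) Gh := by
    rw [hGheq]; exact hKsmooth.neg.smul hG
  have hnondeg : ∀ (x w : E2), (∀ v, g x w v = 0) → w = 0 := fun x w hw => hg.nondeg x w hw
  -- main pointwise identity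
  have hmain : ∀ (x u : E2), fderiv ℝ K x u • G x = fderiv ℝ f x u • GK x := by
    intro x u
    -- symmetry of the Hessian of h
    have hfderiv_eval : ∀ w v : E2, fderiv ℝ (fun y => fderiv ℝ h y v) x w
        = fderiv ℝ (fderiv ℝ h) x w v := by
      intro w v
      have hdiffc : DifferentiableAt ℝ (fderiv ℝ h) x :=
        (hh.fderiv_right (m := 1) (WithTop.coe_le_coe.mpr le_top)).differentiable one_ne_zero x
      have h2 : fderiv ℝ (fun y => fderiv ℝ h y v) x
          = (fderiv ℝ h x).comp (fderiv ℝ (fun _ : E2 => v) x)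
            + (fderiv ℝ (fderiv ℝ h) x).flip v :=
        fderiv_clm_apply hdiffc (differentiableAt_const v)
      rw [h2]
      simp
    have hdh : ∀ y, HasFDerivAt h (fderiv ℝ h y) y :=
      fun y => (hh.differentiable (by simp) y).hasFDerivAt
    have hdd : HasFDerivAt (fderiv ℝ h) (fderiv ℝ (fderiv ℝ h) x) x :=
      (((hh.fderiv_right (m := 1) (WithTop.coe_le_coe.mpr le_top)).differentiable one_ne_zero) x).hasFDerivAt
    have hsymH : ∀ u v : E2, g x (D (VConst u) Gh x) v = g x (D (VConst v) Gh x) u := by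
      intro u v
      have hc1 := hD.compat (VConst u) Gh (VConst v) contDiff_const hGhsmooth contDiff_const x
      have hc2 := hD.compat (VConst v) Gh (VConst u) contDiff_const hGhsmooth contDiff_const x
      have hrw : ∀ v : E2, (fun y => g y (Gh y) (VConst v y)) = fun y => fderiv ℝ h y v :=
        fun v => funext fun y => hgradh y v
      rw [hrw] at hc1 hc2
      simp only [VConst] at hc1 hc2
      rw [hfderiv_eval u v] at hc1
      rw [hfderiv_eval v u] at hc2
      have hsym2 : fderiv ℝ (fderiv ℝ h) x u v = fderiv ℝ (fderiv ℝ h) x v u :=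
        second_derivative_symmetric hdh hdd u v
      have htor := hD.torsion_free (VConst u) (VConst v) contDiff_const contDiff_const
      have htor' : D (VConst u) (VConst v) x = D (VConst v) (VConst u) x := by
        have h1 := congrFun htor x
        rw [hbr u v] at h1
        simpa [Pi.sub_apply, sub_eq_zero] using h1
      rw [hsym2, htor'] at hc1
      linarith [hc1, hc2]
    -- the Hessian of h computed via h∇f and the conformal equation
    have hhess : ∀ u v : E2, g x (D (VConst u) Gh x) v
        = -(fderiv ℝ K x u) * g x (G x) v + (-(K x)) * (h x * g x u v) := by
      intro u v
      have hl := hD.leibniz (fun y => -K y) (VConst u) G hKsmooth.neg contDiff_const hG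
      rw [hGheq]
      have hlx := congrFun hl x
      rw [hlx, hconf u x]
      simp only [VConst]
      rw [hg.add_left, hg.smul_left, hg.smul_left, hg.smul_left, fderiv_fun_neg]
      simp only [ContinuousLinearMap.neg_apply]
    have key : ∀ v : E2, fderiv ℝ K x u * g x (G x) v = fderiv ℝ f x u * g x (GK x) v := by
      intro v
      have h1 := hsymH u v
      rw [hhess u v, hhess v u, hg.symm x v u] at h1
      have h2 : fderiv ℝ K x u * g x (G x) v = fderiv ℝ K x v * g x (G x) u := by
        linarith [h1]
      have hGu : g x (G x) u = fderiv ℝ f x u := hgrad x u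
      have hGKv : fderiv ℝ K x v = g x (GK x) v := (hgradK x v).symm
      rw [h2, hGu, hGKv]
      ring
    have hz : ∀ v, g x (fderiv ℝ K x u • G x - fderiv ℝ f x u • GK x) v = 0 := by
      intro v
      rw [gsubl, hg.smul_left, hg.smul_left, key v]
      ring
    have h0 := hnondeg x _ hz
    exact sub_eq_zero.mp h0
  refine ⟨fun X x => hmain x (X x), fun q hq => ?_⟩
  have hmq := hmain q (G q)
  have hb : fderiv ℝ f q (G q) = g q (G q) (G q) := (hgrad q (G q)).symm
  have hbpos : 0 < fderiv ℝ f q (G q) := by rw [hb]; exact hg.posdef q (G q) hq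
  have hbne : fderiv ℝ f q (G q) ≠ 0 := hbpos.ne'
  refine ⟨fderiv ℝ K q (G q) / fderiv ℝ f q (G q), ?_⟩
  calc GK q = (fderiv ℝ f q (G q))⁻¹ • (fderiv ℝ f q (G q) • GK q) := by
        rw [smul_smul, inv_mul_cancel₀ hbne, one_smul]
    _ = (fderiv ℝ f q (G q))⁻¹ • (fderiv ℝ K q (G q) • G q) := by rw [hmq]
    _ = (fderiv ℝ K q (G q) / fderiv ℝ f q (G q)) • G q := by
        rw [smul_smul, div_eq_inv_mul]
end
end

section
/- Let $p$ be a point in a Riemannian manifold $(M^n,g)$, $n>2$, and suppose there is a smooth function $f$ near $p$ with $\nabla f(p)=0$, $\nabla^2 f = h\,g$ for a smooth function $h$ with $h(p)\neq 0$. Then all sectional curvatures $K(p,\sigma)$ for 2-planes $\sigma\subset T_pM$ are equal. -/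
open scoped RealInnerProductSpace
noncomputable section

namespace S16
variable {E : Type*} [NormedAddCommGroup E] [NormedSpace ℝ E]
  {g : E → E → E → ℝ}

/-- `g x` as a bilinear map. -/
def gl (hg : IsMetric g) (x : E) : E →ₗ[ℝ] E →ₗ[ℝ] ℝ :=
  LinearMap.mk₂ ℝ (g x) (hg.add_left x) (fun a u v => by simpa using hg.smul_left x a u v)
    (fun u v w => by rw [hg.symm x u (v+w), hg.add_left, hg.symm x v u, hg.symm x w u])
    (fun a u v => by rw [hg.symm x u (a • v), hg.smul_left, hg.symm x v u]; simp)

@[simp] lemma gl_apply (hg : IsMetric g) (x u v : E) : gl hg x u v = g x u v := rfl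

lemma g_nondeg (hg : IsMetric g) {x u : E} (h : ∀ v, g x u v = 0) : u = 0 := by
  by_contra hu
  exact absurd (h u) (ne_of_gt (hg.posdef x u hu))

lemma g_eq_of_forall (hg : IsMetric g) {x : E} {a b : E}
    (h : ∀ v, g x a v = g x b v) : a = b := by
  have hz : ∀ v, g x (a - b) v = 0 := by
    intro v
    have h2 : gl hg x (a - b) v = gl hg x a v - gl hg x b v := by
      rw [← LinearMap.sub_apply, ← map_sub]
    simp only [gl_apply] at h2
    rw [h2, h v, sub_self]
  exact sub_eq_zero.mp (g_nondeg hg hz)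

section Euc
variable {n : ℕ} {g : EuclideanSpace ℝ (Fin n) → EuclideanSpace ℝ (Fin n) → EuclideanSpace ℝ (Fin n) → ℝ}

local notation "EN" => EuclideanSpace ℝ (Fin n)

lemma sum_single (v : EN) : ∑ i, v i • EuclideanSpace.single i (1:ℝ) = v := by
  ext j
  classical
  simp [EuclideanSpace.single_apply, Finset.sum_apply, Pi.single_apply]

lemma g_expand (hg : IsMetric g) (x z w : EN) :
    g x z w = ∑ i, ∑ j, z i * w j * g x (EuclideanSpace.single i 1) (EuclideanSpace.single j 1) := by
  conv_lhs => rw [← gl_apply hg, ← sum_single z, ← sum_single w]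
  simp only [map_sum, map_smul, LinearMap.coe_sum, Finset.sum_apply, LinearMap.smul_apply,
    smul_eq_mul, gl_apply]
  rw [Finset.sum_comm]
  refine Finset.sum_congr rfl fun i _ => ?_
  rw [Finset.mul_sum]
  exact Finset.sum_congr rfl fun j _ => by ring

lemma g_smooth_vf (hg : IsMetric g) {Z W : EN → EN}
    (hZ : ContDiff ℝ (⊤ : ℕ∞) Z) (hW : ContDiff ℝ (⊤ : ℕ∞) W) :
    ContDiff ℝ (⊤ : ℕ∞) fun x => g x (Z x) (W x) := by
  have : (fun x => g x (Z x) (W x)) = fun x =>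
      ∑ i, ∑ j, Z x i * W x j * g x (EuclideanSpace.single i 1) (EuclideanSpace.single j 1) := by
    funext x; exact g_expand hg x (Z x) (W x)
  rw [this]
  refine ContDiff.sum fun i _ => ContDiff.sum fun j _ => ?_
  exact (((EuclideanSpace.proj i).contDiff.comp hZ).mul
    ((EuclideanSpace.proj j).contDiff.comp hW)).mul (hg.smooth _ _)


variable {D : (EuclideanSpace ℝ (Fin n) → EuclideanSpace ℝ (Fin n)) → (EuclideanSpace ℝ (Fin n) → EuclideanSpace ℝ (Fin n)) → (EuclideanSpace ℝ (Fin n) → EuclideanSpace ℝ (Fin n))}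

lemma bracket_const (u v : EN) : bracketVF (VConst u) (VConst v) = VConst 0 := by
  funext x
  show fderiv ℝ (fun _ : EN => v) x u - fderiv ℝ (fun _ : EN => u) x v = (0:EN)
  simp

lemma D_vconst_zero (hD : IsLeviCivita g D) {Z : EN → EN} (hZ : ContDiff ℝ (⊤ : ℕ∞) Z) :
    D (VConst 0) Z = fun _ => 0 := by
  have h0 : (VConst (0:EN)) = fun x => (0:ℝ) • Z x := by funext x; simp [VConst]
  rw [h0, hD.tensor_left _ _ _ contDiff_const hZ hZ]
  funext x; simp

lemma curv_const_eq (hD : IsLeviCivita g D) (u v : EN) {Z : EN → EN} (hZ : ContDiff ℝ (⊤ : ℕ∞) Z) :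
    curv D (VConst u) (VConst v) Z
      = fun x => D (VConst u) (D (VConst v) Z) x - D (VConst v) (D (VConst u) Z) x := by
  unfold curv
  rw [bracket_const, D_vconst_zero hD hZ]
  funext x
  simp [Pi.sub_apply]

lemma curv_smooth (hD : IsLeviCivita g D) (u v : EN) {Z : EN → EN} (hZ : ContDiff ℝ (⊤ : ℕ∞) Z) :
    ContDiff ℝ (⊤ : ℕ∞) (curv D (VConst u) (VConst v) Z) := by
  rw [curv_const_eq hD u v hZ]
  exact (hD.smooth _ _ contDiff_const (hD.smooth _ _ contDiff_const hZ)).sub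
    (hD.smooth _ _ contDiff_const (hD.smooth _ _ contDiff_const hZ))

lemma D_const_comm (hD : IsLeviCivita g D) (u v x : EN) :
    D (VConst u) (VConst v) x = D (VConst v) (VConst u) x := by
  have h1 := hD.torsion_free (VConst u) (VConst v) contDiff_const contDiff_const
  rw [bracket_const] at h1
  have h2 := congrFun h1 x
  simpa [VConst, Pi.sub_apply, sub_eq_zero] using h2

lemma snd_deriv_pairing (hg : IsMetric g) (hD : IsLeviCivita g D)
    {Z W : EN → EN} (hZ : ContDiff ℝ (⊤ : ℕ∞) Z) (hW : ContDiff ℝ (⊤ : ℕ∞) W) (x z w : EN) :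
    fderiv ℝ (fderiv ℝ (fun y => g y (Z y) (W y))) x z w
      = g x (D (VConst z) (D (VConst w) Z) x) (W x)
        + g x (D (VConst w) Z x) (D (VConst z) W x)
        + g x (D (VConst z) Z x) (D (VConst w) W x)
        + g x (Z x) (D (VConst z) (D (VConst w) W) x) := by
  set s := fun y => g y (Z y) (W y) with hs_def
  have hs : ContDiff ℝ (⊤ : ℕ∞) s := g_smooth_vf hg hZ hW
  have hds : ContDiff ℝ (⊤ : ℕ∞) (fderiv ℝ s) := hs.fderiv_right (by simp)
  have hdiff : DifferentiableAt ℝ (fderiv ℝ s) x := (hds.differentiable (by simp)) x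
  have h1 : fderiv ℝ (fun y => fderiv ℝ s y w) x z = fderiv ℝ (fderiv ℝ s) x z w := by
    rw [show (fun y => fderiv ℝ s y w) = fun y => (fderiv ℝ s y) ((fun _ => w) y) from rfl,
      fderiv_clm_apply hdiff (differentiableAt_const w)]
    simp
  rw [← h1]
  have hDWZ : ContDiff ℝ (⊤ : ℕ∞) (D (VConst w) Z) := hD.smooth _ _ contDiff_const hZ
  have hDWW : ContDiff ℝ (⊤ : ℕ∞) (D (VConst w) W) := hD.smooth _ _ contDiff_const hW
  have hFw : (fun y => fderiv ℝ s y w)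
      = fun y => g y (D (VConst w) Z y) (W y) + g y (Z y) (D (VConst w) W y) := by
    funext y
    exact hD.compat (VConst w) Z W contDiff_const hZ hW y
  rw [hFw]
  have hA : ContDiff ℝ (⊤ : ℕ∞) fun y => g y (D (VConst w) Z y) (W y) := g_smooth_vf hg hDWZ hW
  have hB : ContDiff ℝ (⊤ : ℕ∞) fun y => g y (Z y) (D (VConst w) W y) := g_smooth_vf hg hZ hDWW
  rw [fderiv_fun_add ((hA.differentiable (by simp)) x) ((hB.differentiable (by simp)) x)]
  have e1 := hD.compat (VConst z) (D (VConst w) Z) W contDiff_const hDWZ hW x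
  have e2 := hD.compat (VConst z) Z (D (VConst w) W) contDiff_const hZ hDWW x
  simp only [VConst] at e1 e2
  simp only [ContinuousLinearMap.add_apply]
  rw [e1, e2]
  ring

lemma curv_antisym (hg : IsMetric g) (hD : IsLeviCivita g D) (u v : EN)
    {Z W : EN → EN} (hZ : ContDiff ℝ (⊤ : ℕ∞) Z) (hW : ContDiff ℝ (⊤ : ℕ∞) W) (x : EN) :
    g x (curv D (VConst u) (VConst v) Z x) (W x)
      + g x (Z x) (curv D (VConst u) (VConst v) W x) = 0 := by
  have hs : ContDiff ℝ (⊤ : ℕ∞) (fun y => g y (Z y) (W y)) := g_smooth_vf hg hZ hW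
  have hsymm := (hs.contDiffAt (x := x)).isSymmSndFDerivAt (by rw [minSmoothness_of_isRCLikeNormedField]; exact WithTop.coe_le_coe.mpr (le_top : (2 : ℕ∞) ≤ ⊤))
  have key := hsymm u v
  rw [snd_deriv_pairing hg hD hZ hW x u v, snd_deriv_pairing hg hD hZ hW x v u] at key
  have hcz := congrFun (curv_const_eq hD u v hZ) x
  have hcw := congrFun (curv_const_eq hD u v hW) x
  have expand1 : g x (curv D (VConst u) (VConst v) Z x) (W x)
      = g x (D (VConst u) (D (VConst v) Z) x) (W x)
        - g x (D (VConst v) (D (VConst u) Z) x) (W x) := by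
    rw [hcz, ← gl_apply hg, map_sub, LinearMap.sub_apply]; rfl
  have expand2 : g x (Z x) (curv D (VConst u) (VConst v) W x)
      = g x (Z x) (D (VConst u) (D (VConst v) W) x)
        - g x (Z x) (D (VConst v) (D (VConst u) W) x) := by
    rw [hcw, ← gl_apply hg, map_sub]; rfl
  rw [expand1, expand2]
  linarith [key]

lemma g_zero_right (hg : IsMetric g) (x a : EN) : g x a 0 = 0 := by
  rw [← gl_apply hg x a 0, (gl hg x a).map_zero]

lemma g_smul_right (hg : IsMetric g) (x a : EN) (c : ℝ) (z : EN) :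
    g x a (c • z) = c * g x a z := by
  rw [← gl_apply hg x a (c • z), (gl hg x a).map_smul, smul_eq_mul, gl_apply]

lemma g_sub_right (hg : IsMetric g) (x a b c : EN) :
    g x a (b - c) = g x a b - g x a c := by
  rw [← gl_apply hg x a (b - c), (gl hg x a).map_sub]
  rfl

lemma orth2 (hn : 2 < n) (hg : IsMetric g) (p a b : EN) :
    ∃ u : EN, u ≠ 0 ∧ g p u a = 0 ∧ g p u b = 0 := by
  let L : EN →ₗ[ℝ] ℝ × ℝ := LinearMap.prod ((gl hg p).flip a) ((gl hg p).flip b)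
  by_cases hker : LinearMap.ker L = ⊥
  · exfalso
    have hinj : Function.Injective L := LinearMap.ker_eq_bot.mp hker
    have hle := LinearMap.finrank_le_finrank_of_injective hinj
    rw [finrank_euclideanSpace_fin] at hle
    have h2 : Module.finrank ℝ (ℝ × ℝ) = 2 := by
      simp [Module.finrank_prod]
    omega
  · obtain ⟨u, hu, hune⟩ := (Submodule.ne_bot_iff _).mp hker
    have hu0 : L u = 0 := LinearMap.mem_ker.mp hu
    exact ⟨u, hune, congrArg Prod.fst hu0, congrArg Prod.snd hu0⟩

lemma cauchy_strict (hg : IsMetric g) (p u v : EN)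
    (hind : LinearIndependent ℝ ![u, v]) :
    0 < g p u u * g p v v - g p u v ^ 2 := by
  have hv : v ≠ 0 := by
    have := hind.ne_zero 1
    simpa using this
  have hgvv : 0 < g p v v := hg.posdef p v hv
  set w : EN := g p v v • u - g p u v • v with hw_def
  have hw : w ≠ 0 := by
    intro hwz
    rw [hw_def, sub_eq_zero] at hwz
    obtain ⟨h1, _⟩ := (LinearIndependent.pair_iff.mp hind) (g p v v) (-(g p u v))
      (by rw [neg_smul, ← hwz]; abel)
    exact (ne_of_gt hgvv) h1
  have hpos := hg.posdef p w hw
  have hexp : g p w w = g p v v ^ 2 * g p u u - 2 * g p v v * g p u v * g p u v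
      + g p u v ^ 2 * g p v v := by
    rw [hw_def]
    rw [← gl_apply hg]
    simp only [map_sub, map_smul, LinearMap.sub_apply, LinearMap.smul_apply, smul_eq_mul]
    simp only [gl_apply]
    rw [hg.symm p v u]
    ring
  rw [hexp] at hpos
  nlinarith [hpos, hgvv]

lemma master (hn : 2 < n)
    (hg : IsMetric g) (hD : IsLeviCivita g D)
    (h : EN → ℝ) (G : EN → EN)
    (hh : ContDiff ℝ (⊤ : ℕ∞) h) (hG : ContDiff ℝ (⊤ : ℕ∞) G)
    (p : EN) (hGp : G p = 0)
    (hhess : ∀ x u v, hessForm g D G x u v = h x * g x u v)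
    (hhp : h p ≠ 0) :
    ∃ c : ℝ, ∀ u v : EN,
      LinearIndependent ℝ ![u, v] → secCurv g D p u v = c := by
  -- the gradient field satisfies D_u G = h • u
  have DG : ∀ (u : EN) (x : EN), D (VConst u) G x = h x • u := by
    intro u x
    refine g_eq_of_forall hg (x := x) fun v => ?_
    rw [hg.smul_left]
    exact hhess x u v
  -- curvature applied to G
  have curvG : ∀ u v x, curv D (VConst u) (VConst v) G x
      = fderiv ℝ h x u • v - fderiv ℝ h x v • u := by
    intro u v x
    have e1 : D (VConst v) G = fun y => h y • VConst v y := funext fun y => DG v y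
    have e2 : D (VConst u) G = fun y => h y • VConst u y := funext fun y => DG u y
    have := congrFun (curv_const_eq hD u v hG) x
    rw [this, e1, e2, hD.leibniz h (VConst u) (VConst v) hh contDiff_const contDiff_const,
      hD.leibniz h (VConst v) (VConst u) hh contDiff_const contDiff_const]
    show (fderiv ℝ h x u • v + h x • D (VConst u) (VConst v) x)
      - (fderiv ℝ h x v • u + h x • D (VConst v) (VConst u) x)
      = fderiv ℝ h x u • v - fderiv ℝ h x v • u
    rw [D_const_comm hD u v x]
    abel
  -- the pairing of R(u,v)w with G
  have phi_eq : ∀ u v w x, g x (curv D (VConst u) (VConst v) (VConst w) x) (G x)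
      = fderiv ℝ h x v * g x u w - fderiv ℝ h x u * g x v w := by
    intro u v w x
    have ha := curv_antisym hg hD u v (Z := VConst w) (W := G) contDiff_const hG x
    have hx : g x (VConst w x) (curv D (VConst u) (VConst v) G x)
        = fderiv ℝ h x u * g x v w - fderiv ℝ h x v * g x u w := by
      rw [curvG u v x]
      show g x w _ = _
      rw [g_sub_right hg, g_smul_right hg, g_smul_right hg, hg.symm x w v, hg.symm x w u]
    rw [hx] at ha
    linarith
  -- first derivative of h vanishes at p
  have a0 : ∀ u, fderiv ℝ h p u = 0 := by
    intro u
    obtain ⟨v0, hv0ne, hv0u, -⟩ := orth2 hn hg p u u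
    have h1 := phi_eq u v0 v0 p
    rw [hGp, g_zero_right hg] at h1
    have huv0 : g p u v0 = 0 := by rw [hg.symm]; exact hv0u
    rw [huv0] at h1
    have hvv : 0 < g p v0 v0 := hg.posdef p v0 hv0ne
    have := h1
    rcases mul_eq_zero.mp (by linarith : fderiv ℝ h p u * g p v0 v0 = 0) with h' | h'
    · exact h'
    · exact absurd h' (ne_of_gt hvv)
  -- second derivative form
  set B : EN → EN → ℝ := fun z w => fderiv ℝ (fun x => fderiv ℝ h x w) p z with hB
  have hdh : ∀ w : EN, ContDiff ℝ (⊤ : ℕ∞) fun x => fderiv ℝ h x w :=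
    fun w => (hh.fderiv_right (by simp)).clm_apply contDiff_const
  -- the key formula for the curvature at p
  have main : ∀ u v w z, h p * g p (curv D (VConst u) (VConst v) (VConst w) p) z
      = B z v * g p u w - B z u * g p v w := by
    intro u v w z
    have hRw : ContDiff ℝ (⊤ : ℕ∞) (curv D (VConst u) (VConst v) (VConst w)) :=
      curv_smooth hD u v contDiff_const
    -- left side via compatibility
    have lhs1 := hD.compat (VConst z) (curv D (VConst u) (VConst v) (VConst w)) G
      contDiff_const hRw hG p
    rw [hGp, g_zero_right hg] at lhs1
    have lhs2 : fderiv ℝ (fun y => g y (curv D (VConst u) (VConst v) (VConst w) y) (G y)) p z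
        = h p * g p (curv D (VConst u) (VConst v) (VConst w) p) z := by
      have : D (VConst z) G p = h p • z := DG z p
      rw [show (VConst z p) = z from rfl] at lhs1
      rw [lhs1, this, g_smul_right hg]
      ring
    -- right side via phi_eq
    have heq : (fun y => g y (curv D (VConst u) (VConst v) (VConst w) y) (G y))
        = fun y => fderiv ℝ h y v * g y u w - fderiv ℝ h y u * g y v w :=
      funext fun y => phi_eq u v w y
    have hα : ∀ w' : EN, DifferentiableAt ℝ (fun x => fderiv ℝ h x w') p :=
      fun w' => ((hdh w').differentiable (by simp)) p
    have hβ : ∀ a b : EN, DifferentiableAt ℝ (fun x => g x a b) p :=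
      fun a b => ((hg.smooth a b).differentiable (by simp)) p
    have rhs : fderiv ℝ (fun y => fderiv ℝ h y v * g y u w - fderiv ℝ h y u * g y v w) p z
        = B z v * g p u w - B z u * g p v w := by
      rw [fderiv_fun_sub ((hα v).fun_mul (hβ u w)) ((hα u).fun_mul (hβ v w))]
      rw [fderiv_fun_mul (hα v) (hβ u w), fderiv_fun_mul (hα u) (hβ v w)]
      simp only [ContinuousLinearMap.sub_apply, ContinuousLinearMap.add_apply,
        ContinuousLinearMap.smul_apply, smul_eq_mul, a0]
      rw [hB]
      ring
    rw [← lhs2, heq, rhs]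
  -- the four-term identity
  have four : ∀ u v w z, B z v * g p u w - B z u * g p v w
      + (B w v * g p u z - B w u * g p v z) = 0 := by
    intro u v w z
    have ha := curv_antisym hg hD u v (Z := VConst w) (W := VConst z)
      contDiff_const contDiff_const p
    have hsymm : g p (VConst w p) (curv D (VConst u) (VConst v) (VConst z) p)
        = g p (curv D (VConst u) (VConst v) (VConst z) p) w := hg.symm p _ _
    rw [hsymm] at ha
    have m1 := main u v w z
    have m2 := main u v z w
    have : h p * g p (curv D (VConst u) (VConst v) (VConst w) p) z
        + h p * g p (curv D (VConst u) (VConst v) (VConst z) p) w = 0 := by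
      rw [← mul_add]
      rw [show g p (curv D (VConst u) (VConst v) (VConst w) p) (VConst z p)
        = g p (curv D (VConst u) (VConst v) (VConst w) p) z from rfl] at ha
      rw [ha, mul_zero]
    rw [m1, m2] at this
    linarith
  -- B is proportional to g at p
  have claimA : ∀ u z v : EN, u ≠ 0 → g p u z = 0 → g p u v = 0 →
      B z v * g p u u = B u u * g p z v := by
    intro u z v hu hz hv
    have h4 := four u v u z
    rw [hg.symm p v u, hv, hz, hg.symm p v z] at h4
    linarith
  have claimC : ∀ u u' : EN, u ≠ 0 → u' ≠ 0 →
      B u u * g p u' u' = B u' u' * g p u u := by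
    intro u u' hu hu'
    obtain ⟨w, hwne, hwu, hwu'⟩ := orth2 hn hg p u u'
    have h1 := claimA w u u hwne hwu hwu
    have h2 := claimA w u' u' hwne hwu' hwu'
    have hww : 0 < g p w w := hg.posdef p w hwne
    -- h1 : B u u * g p w w = B w w * g p u u ; h2 : B u' u' * g p w w = B w w * g p u' u'
    exact mul_right_cancel₀ (ne_of_gt hww)
      (show B u u * g p u' u' * g p w w = B u' u' * g p u u * g p w w by
        linear_combination g p u' u' * h1 - g p u u * h2)
  obtain ⟨i0, hi0⟩ : ∃ i : Fin n, True := ⟨⟨0, by omega⟩, trivial⟩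
  set e : EN := EuclideanSpace.single i0 (1:ℝ) with he_def
  have he : e ≠ 0 := by
    intro h0
    have := congrArg (fun y : EN => y i0) h0
    rw [he_def] at this
    simp [EuclideanSpace.single_apply] at this
  have hgee : 0 < g p e e := hg.posdef p e he
  set lam : ℝ := B e e / g p e e with hlam
  have Blam : ∀ z v : EN, B z v = lam * g p z v := by
    intro z v
    obtain ⟨u, hune, huz, huv⟩ := orth2 hn hg p z v
    have h1 := claimA u z v hune huz huv
    have h2 := claimC u e hune he
    have huu : 0 < g p u u := hg.posdef p u hune
    have key : B z v * g p e e * g p u u = B e e * g p z v * g p u u := by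
      linear_combination g p e e * h1 + g p z v * h2
    have key2 := mul_right_cancel₀ (ne_of_gt huu) key
    rw [hlam, div_mul_eq_mul_div, eq_div_iff (ne_of_gt hgee)]
    exact key2
  -- conclusion
  refine ⟨-lam / h p, fun u v hind => ?_⟩
  have hd : 0 < g p u u * g p v v - g p u v ^ 2 := cauchy_strict hg p u v hind
  have hm := main u v v u
  rw [Blam u v, Blam u u] at hm
  show g p (curv D (VConst u) (VConst v) (VConst v) p) u /
      (g p u u * g p v v - g p u v ^ 2) = -lam / h p
  rw [div_eq_div_iff (ne_of_gt hd) hhp]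
  linear_combination hm

end Euc
end S16


/-- if `n > 2` and there is a smooth `f` near `p` with
`∇f(p) = 0`, `∇²f = h g` and `h(p) ≠ 0`, then all sectional curvatures of
2-planes in `T_pM` coincide. -/
theorem stmt_16 {n : ℕ} (hn : 2 < n)
    (g : EuclideanSpace ℝ (Fin n) → EuclideanSpace ℝ (Fin n) → EuclideanSpace ℝ (Fin n) → ℝ)
    (D : (EuclideanSpace ℝ (Fin n) → EuclideanSpace ℝ (Fin n)) →
      (EuclideanSpace ℝ (Fin n) → EuclideanSpace ℝ (Fin n)) →
      (EuclideanSpace ℝ (Fin n) → EuclideanSpace ℝ (Fin n)))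
    (hg : IsMetric g) (hD : IsLeviCivita g D)
    (f h : EuclideanSpace ℝ (Fin n) → ℝ)
    (G : EuclideanSpace ℝ (Fin n) → EuclideanSpace ℝ (Fin n))
    (hf : ContDiff ℝ (⊤ : ℕ∞) f) (hh : ContDiff ℝ (⊤ : ℕ∞) h) (hG : ContDiff ℝ (⊤ : ℕ∞) G)
    (hgrad : IsGradient g f G)
    (p : EuclideanSpace ℝ (Fin n)) (hGp : G p = 0)
    (hhess : ∀ x u v, hessForm g D G x u v = h x * g x u v)
    (hhp : h p ≠ 0) :
    ∀ u v u' v' : EuclideanSpace ℝ (Fin n),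
      LinearIndependent ℝ ![u, v] → LinearIndependent ℝ ![u', v'] →
      secCurv g D p u v = secCurv g D p u' v' := by
  obtain ⟨c, hc⟩ := S16.master hn hg hD h G hh hG p hGp hhess hhp
  intro u v u' v' h1 h2
  rw [hc u v h1, hc u' v' h2]
end
end

section
/- Let $(M^2,g)$ be a Riemannian surface and $p\in M$ the base of a conformal Morse germ, i.e., there exists a smooth function $f$ near $p$ with $\nabla f(p)=0$ and $\nabla^2 f = h g$, $h(p)\neq 0$. Then $p$ is a critical point of the Gauss curvature: $\nabla K(p)=0$. -/
open scoped RealInnerProductSpace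
noncomputable section

section AuxiliaryLemmas

abbrev EE := EuclideanSpace ℝ (Fin 2)

variable {g : EE → EE → EE → ℝ}

lemma g_smul_right (hg : IsMetric g) (x : EE) (a : ℝ) (u v : EE) :
    g x u (a • v) = a * g x u v := by
  rw [hg.symm, hg.smul_left, hg.symm]

lemma g_add_right (hg : IsMetric g) (x : EE) (u v w : EE) :
    g x u (v + w) = g x u v + g x u w := by
  rw [hg.symm, hg.add_left, hg.symm x v, hg.symm x w]

lemma g_sub_left (hg : IsMetric g) (x : EE) (u v w : EE) :
    g x (u - v) w = g x u w - g x v w := by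
  have h : u - v = u + (-1 : ℝ) • v := by rw [neg_one_smul]; abel
  rw [h, hg.add_left, hg.smul_left]; ring

lemma g_zero_left (hg : IsMetric g) (x : EE) (v : EE) : g x 0 v = 0 := by
  have := hg.smul_left x 0 0 v; simpa using this

lemma g_ext (hg : IsMetric g) (x : EE) {w w' : EE}
    (H : ∀ v, g x w v = g x w' v) : w = w' := by
  by_contra hne
  have hd : w - w' ≠ 0 := sub_ne_zero.mpr hne
  have h1 := hg.posdef x _ hd
  have h2 : g x (w - w') (w - w') = 0 := by
    rw [g_sub_left hg, H]; ring
  linarith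

def ee1 : EE := EuclideanSpace.single 0 1
def ee2 : EE := EuclideanSpace.single 1 1

lemma decompEE (w : EE) : w = w 0 • ee1 + w 1 • ee2 := by
  ext i; fin_cases i <;> simp [ee1, ee2, EuclideanSpace.single_apply]

lemma coord_smooth {W : EE → EE} (hW : ContDiff ℝ (⊤ : ℕ∞) W) (i : Fin 2) :
    ContDiff ℝ (⊤ : ℕ∞) fun x => W x i :=
  (EuclideanSpace.proj (𝕜 := ℝ) i).contDiff.comp hW

lemma g_expand (hg : IsMetric g) (x : EE) (w v : EE) :
    g x w v = w 0 * v 0 * g x ee1 ee1 + w 0 * v 1 * g x ee1 ee2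
      + w 1 * v 0 * g x ee2 ee1 + w 1 * v 1 * g x ee2 ee2 := by
  conv_lhs => rw [decompEE w, decompEE v]
  rw [hg.add_left, hg.smul_left, hg.smul_left, g_add_right hg, g_add_right hg,
    g_smul_right hg, g_smul_right hg, g_smul_right hg, g_smul_right hg]
  ring

lemma gWV_smooth (hg : IsMetric g) {W V : EE → EE}
    (hW : ContDiff ℝ (⊤ : ℕ∞) W) (hV : ContDiff ℝ (⊤ : ℕ∞) V) :
    ContDiff ℝ (⊤ : ℕ∞) fun x => g x (W x) (V x) := by
  have h : (fun x => g x (W x) (V x)) = fun x =>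
      W x 0 * V x 0 * g x ee1 ee1 + W x 0 * V x 1 * g x ee1 ee2
      + W x 1 * V x 0 * g x ee2 ee1 + W x 1 * V x 1 * g x ee2 ee2 :=
    funext fun x => g_expand hg x (W x) (V x)
  rw [h]
  exact (((((coord_smooth hW 0).mul (coord_smooth hV 0)).mul (hg.smooth _ _)).add
    (((coord_smooth hW 0).mul (coord_smooth hV 1)).mul (hg.smooth _ _))).add
    (((coord_smooth hW 1).mul (coord_smooth hV 0)).mul (hg.smooth _ _))).add
    (((coord_smooth hW 1).mul (coord_smooth hV 1)).mul (hg.smooth _ _))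

lemma fderiv_app_smooth {φ : EE → ℝ} (hφ : ContDiff ℝ (⊤ : ℕ∞) φ) (v : EE) :
    ContDiff ℝ (⊤ : ℕ∞) fun x => fderiv ℝ φ x v :=
  ((ContinuousLinearMap.apply ℝ ℝ v).contDiff).comp (hφ.fderiv_right (by simp))

lemma schwarz {φ : EE → ℝ} (hφ : ContDiff ℝ (⊤ : ℕ∞) φ) (x u v : EE) :
    fderiv ℝ (fun y => fderiv ℝ φ y v) x u = fderiv ℝ (fun y => fderiv ℝ φ y u) x v := by
  have hd : Differentiable ℝ (fderiv ℝ φ) :=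
    (hφ.fderiv_right (m := 1) (WithTop.coe_le_coe.mpr le_top)).differentiable one_ne_zero
  have key : ∀ a b : EE, fderiv ℝ (fun y => fderiv ℝ φ y a) x b
      = fderiv ℝ (fderiv ℝ φ) x b a := by
    intro a b
    have h1 := fderiv_clm_apply (hd.differentiableAt (x := x)) (differentiableAt_const a)
    rw [h1]; simp
  rw [key v u, key u v]
  have hs : IsSymmSndFDerivAt ℝ φ x := hφ.contDiffAt.isSymmSndFDerivAt (by simp; exact WithTop.coe_le_coe.mpr le_top)
  exact hs u v

variable {D : (EE → EE) → (EE → EE) → (EE → EE)}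

lemma VConst_smooth (u : EE) : ContDiff ℝ (⊤ : ℕ∞) (VConst u) := contDiff_const

lemma D_zero (hD : IsLeviCivita g D) {Z : EE → EE} (hZ : ContDiff ℝ (⊤ : ℕ∞) Z) :
    D (fun _ => (0 : EE)) Z = fun _ => (0 : EE) := by
  have h0 := hD.tensor_left (fun _ => (0 : ℝ)) Z Z contDiff_const hZ hZ
  have h1 : (fun x => (0 : ℝ) • Z x) = fun _ => (0 : EE) := by funext x; simp
  rw [h1] at h0
  rw [h0]; funext x; simp

lemma bracket_const (u v : EE) :
    bracketVF (VConst u) (VConst v) = fun _ => (0 : EE) := by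
  funext x
  have h1 : fderiv ℝ (VConst v) x = 0 := fderiv_const_apply v
  have h2 : fderiv ℝ (VConst u) x = 0 := fderiv_const_apply u
  simp [bracketVF, h1, h2]

lemma D_const_comm (hD : IsLeviCivita g D) (u v : EE) :
    D (VConst u) (VConst v) = D (VConst v) (VConst u) := by
  have h := hD.torsion_free (VConst u) (VConst v) contDiff_const contDiff_const
  rw [bracket_const] at h
  have h0 : D (VConst u) (VConst v) - D (VConst v) (VConst u) = (0 : EE → EE) := h
  exact sub_eq_zero.mp h0

lemma curv_const_eq (hD : IsLeviCivita g D) (u v : EE) {Z : EE → EE}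
    (hZ : ContDiff ℝ (⊤ : ℕ∞) Z) :
    curv D (VConst u) (VConst v) Z
      = fun x => D (VConst u) (D (VConst v) Z) x - D (VConst v) (D (VConst u) Z) x := by
  unfold curv
  rw [bracket_const, D_zero hD hZ]
  funext x; simp

lemma curv_add3 (hD : IsLeviCivita g D) (X X' Y Z : EE → EE) :
    curv D X X' (Y + Z) = curv D X X' Y + curv D X X' Z := by
  unfold curv
  rw [hD.add_right X' Y Z, hD.add_right X Y Z, hD.add_right X _ _, hD.add_right X' _ _,
    hD.add_right (bracketVF X X') Y Z]
  funext x
  simp only [Pi.add_apply, Pi.sub_apply]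
  abel

/-- Tensoriality of curvature in the third slot, for constant X, Y. -/
lemma curv_tensor (hD : IsLeviCivita g D) (φ : EE → ℝ) (hφ : ContDiff ℝ (⊤ : ℕ∞) φ)
    (u v z : EE) :
    curv D (VConst u) (VConst v) (fun x => φ x • z)
      = fun x => φ x • curv D (VConst u) (VConst v) (VConst z) x := by
  have hΦ : ContDiff ℝ (⊤ : ℕ∞) (fun x => φ x • z) := hφ.smul contDiff_const
  rw [curv_const_eq hD u v hΦ, curv_const_eq hD u v (VConst_smooth z)]
  have hlvz : ∀ (w w' : EE), D (VConst w) (fun x => φ x • z)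
      = fun x => fderiv ℝ φ x w • z + φ x • D (VConst w) (VConst z) x := by
    intro w w'
    exact hD.leibniz φ (VConst w) (VConst z) hφ contDiff_const contDiff_const
  have step : ∀ w w' : EE, D (VConst w) (D (VConst w') (fun x => φ x • z))
      = fun x => (fderiv ℝ (fun y => fderiv ℝ φ y w') x w) • z
          + fderiv ℝ φ x w' • D (VConst w) (VConst z) x
          + (fderiv ℝ φ x w • D (VConst w') (VConst z) x
            + φ x • D (VConst w) (D (VConst w') (VConst z)) x) := by
    intro w w'
    rw [hlvz w' w]
    have hsplit : (fun x => fderiv ℝ φ x w' • z + φ x • D (VConst w') (VConst z) x)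
        = (fun x => (fun y => fderiv ℝ φ y w') x • VConst z x)
          + (fun x => φ x • D (VConst w') (VConst z) x) := rfl
    rw [hsplit, hD.add_right]
    have h1 := hD.leibniz (fun y => fderiv ℝ φ y w') (VConst w) (VConst z)
      (fderiv_app_smooth hφ w') contDiff_const contDiff_const
    have h2 := hD.leibniz φ (VConst w) (D (VConst w') (VConst z)) hφ contDiff_const
      (hD.smooth _ _ contDiff_const contDiff_const)
    rw [h1, h2]
    funext x
    simp only [Pi.add_apply, VConst]
  rw [step u v, step v u]
  funext x
  simp only [Pi.sub_apply]
  rw [schwarz hφ x u v]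
  module

/-- Antisymmetry of the curvature in the last two slots, for constant fields. -/
lemma curv_antisym (hg : IsMetric g) (hD : IsLeviCivita g D) (u v z w x : EE) :
    g x (curv D (VConst u) (VConst v) (VConst z) x) w
      = - g x (curv D (VConst u) (VConst v) (VConst w) x) z := by
  have hc : ∀ a : EE, ContDiff ℝ (⊤ : ℕ∞) (VConst a) := VConst_smooth
  -- first derivative of F := fun y => g y z w
  have stepA : ∀ a : EE, (fun y => fderiv ℝ (fun y' => g y' z w) y a)
      = fun y => g y (D (VConst a) (VConst z) y) (VConst w y)
          + g y (VConst z y) (D (VConst a) (VConst w) y) := by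
    intro a
    funext y
    exact hD.compat (VConst a) (VConst z) (VConst w) (hc a) (hc z) (hc w) y
  -- second derivative
  have stepB : ∀ a b : EE, fderiv ℝ (fun y => fderiv ℝ (fun y' => g y' z w) y a) x b
      = g x (D (VConst b) (D (VConst a) (VConst z)) x) w
        + g x (D (VConst a) (VConst z) x) (D (VConst b) (VConst w) x)
        + (g x (D (VConst b) (VConst z) x) (D (VConst a) (VConst w) x)
          + g x z (D (VConst b) (D (VConst a) (VConst w)) x)) := by
    intro a b
    rw [stepA a]
    have hP : ContDiff ℝ (⊤ : ℕ∞) (fun y => g y (D (VConst a) (VConst z) y) (VConst w y)) :=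
      gWV_smooth hg (hD.smooth _ _ (hc a) (hc z)) (hc w)
    have hQ : ContDiff ℝ (⊤ : ℕ∞) (fun y => g y (VConst z y) (D (VConst a) (VConst w) y)) :=
      gWV_smooth hg (hc z) (hD.smooth _ _ (hc a) (hc w))
    rw [fderiv_fun_add (hP.differentiable (by simp) x) (hQ.differentiable (by simp) x)]
    have h1 := hD.compat (VConst b) (D (VConst a) (VConst z)) (VConst w) (hc b)
      (hD.smooth _ _ (hc a) (hc z)) (hc w) x
    have h2 := hD.compat (VConst b) (VConst z) (D (VConst a) (VConst w)) (hc b)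
      (hc z) (hD.smooth _ _ (hc a) (hc w)) x
    simp only [VConst] at h1 h2 ⊢
    simp only [ContinuousLinearMap.add_apply]
    rw [h1, h2]
  have hsym := schwarz (hg.smooth z w) x u v
  rw [stepB v u, stepB u v] at hsym
  have hcz := curv_const_eq hD u v (hc z)
  have hcw := curv_const_eq hD u v (hc w)
  have ezz : curv D (VConst u) (VConst v) (VConst z) x
      = D (VConst u) (D (VConst v) (VConst z)) x - D (VConst v) (D (VConst u) (VConst z)) x := by
    rw [hcz]
  have eww : curv D (VConst u) (VConst v) (VConst w) x
      = D (VConst u) (D (VConst v) (VConst w)) x - D (VConst v) (D (VConst u) (VConst w)) x := by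
    rw [hcw]
  rw [ezz, eww, g_sub_left hg]
  have hzw : g x z (D (VConst u) (D (VConst v) (VConst w)) x
      - D (VConst v) (D (VConst u) (VConst w)) x)
      = g x z (D (VConst u) (D (VConst v) (VConst w)) x)
        - g x z (D (VConst v) (D (VConst u) (VConst w)) x) := by
    rw [hg.symm, g_sub_left hg, hg.symm x _ z, hg.symm x _ z]
  have h12 : g x (D (VConst u) (VConst z) x) (D (VConst v) (VConst w) x)
      = g x (D (VConst v) (VConst w) x) (D (VConst u) (VConst z) x) := hg.symm _ _ _
  have h21 : g x (D (VConst v) (VConst z) x) (D (VConst u) (VConst w) x)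
      = g x (D (VConst u) (VConst w) x) (D (VConst v) (VConst z) x) := hg.symm _ _ _
  have hfin : g x (D (VConst u) (D (VConst v) (VConst z)) x) w
      - g x (D (VConst v) (D (VConst u) (VConst z)) x) w
      = - (g x z (D (VConst u) (D (VConst v) (VConst w)) x)
          - g x z (D (VConst v) (D (VConst u) (VConst w)) x)) := by
    linarith [hsym, h12, h21]
  rw [hfin, ← hzw]
  rw [hg.symm x z]

lemma curv_self_zero (hg : IsMetric g) (hD : IsLeviCivita g D) (u v z x : EE) :
    g x (curv D (VConst u) (VConst v) (VConst z) x) z = 0 := by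
  have := curv_antisym hg hD u v z z x
  linarith

def rrf (g : EE → EE → EE → ℝ) (D : (EE → EE) → (EE → EE) → (EE → EE)) : EE → ℝ :=
  fun x => g x (curv D (VConst ee1) (VConst ee2) (VConst ee2) x) ee1

def ddf (g : EE → EE → EE → ℝ) : EE → ℝ :=
  fun x => g x ee1 ee1 * g x ee2 ee2 - g x ee1 ee2 ^ 2

lemma gaussK_eq (g : EE → EE → EE → ℝ) (D : (EE → EE) → (EE → EE) → (EE → EE)) (x : EE) :
    gaussK g D x = rrf g D x / ddf g x := rfl

lemma g_sub_right (hg : IsMetric g) (x : EE) (u v w : EE) :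
    g x u (v - w) = g x u v - g x u w := by
  rw [hg.symm, g_sub_left hg, hg.symm x v, hg.symm x w]

lemma ee1_ne : (ee1 : EE) ≠ 0 := by
  intro hcon
  have h0 := congrArg (fun w : EE => w 0) hcon
  simp [ee1, EuclideanSpace.single_apply] at h0

lemma ee2_ne : (ee2 : EE) ≠ 0 := by
  intro hcon
  have h0 := congrArg (fun w : EE => w 1) hcon
  simp [ee2, EuclideanSpace.single_apply] at h0

lemma ddf_pos (hg : IsMetric g) (x : EE) : 0 < ddf g x := by
  set w : EE := g x ee1 ee1 • ee2 - g x ee1 ee2 • ee1 with hw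
  have hg11 : 0 < g x ee1 ee1 := hg.posdef x ee1 ee1_ne
  have hwne : w ≠ 0 := by
    intro hcon
    have h1 : w 1 = 0 := by rw [hcon]; rfl
    have h2 : w 1 = g x ee1 ee1 := by
      simp [hw, ee1, ee2, EuclideanSpace.single_apply]
    rw [h2] at h1; linarith
  have hww : g x w w = g x ee1 ee1 * ddf g x := by
    rw [hw]
    rw [g_sub_left hg, hg.smul_left, hg.smul_left, g_sub_right hg, g_sub_right hg,
      g_smul_right hg, g_smul_right hg, g_smul_right hg, g_smul_right hg,
      hg.symm x ee2 ee1]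
    simp only [ddf]; ring
  have hpos := hg.posdef x w hwne
  rw [hww] at hpos
  by_contra hnot
  push_neg at hnot
  nlinarith

lemma ddf_smooth (hg : IsMetric g) : ContDiff ℝ (⊤ : ℕ∞) (ddf g) := by
  unfold ddf
  exact ((hg.smooth ee1 ee1).mul (hg.smooth ee2 ee2)).sub ((hg.smooth ee1 ee2).pow 2)

lemma rrf_smooth (hg : IsMetric g) (hD : IsLeviCivita g D) : ContDiff ℝ (⊤ : ℕ∞) (rrf g D) := by
  have hc := curv_const_eq hD ee1 ee2 (VConst_smooth ee2)
  have hW : ContDiff ℝ (⊤ : ℕ∞) (curv D (VConst ee1) (VConst ee2) (VConst ee2)) := by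
    rw [hc]
    exact ((hD.smooth _ _ contDiff_const (hD.smooth _ _ contDiff_const contDiff_const)).sub
      (hD.smooth _ _ contDiff_const (hD.smooth _ _ contDiff_const contDiff_const)))
  exact gWV_smooth hg hW contDiff_const

lemma DG_eq (hg : IsMetric g) {D : (EE → EE) → (EE → EE) → (EE → EE)}
    {h : EE → ℝ} {G : EE → EE}
    (hhess : ∀ x u v, hessForm g D G x u v = h x * g x u v) (u : EE) :
    D (VConst u) G = fun x => h x • u := by
  funext x
  apply g_ext hg x
  intro v
  have h1 : g x (D (VConst u) G x) v = h x * g x u v := hhess x u v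
  rw [h1, hg.smul_left]

lemma curvG_eq (hg : IsMetric g) (hD : IsLeviCivita g D)
    {h : EE → ℝ} {G : EE → EE} (hh : ContDiff ℝ (⊤ : ℕ∞) h) (hG : ContDiff ℝ (⊤ : ℕ∞) G)
    (hhess : ∀ x u v, hessForm g D G x u v = h x * g x u v) (u v : EE) :
    curv D (VConst u) (VConst v) G
      = fun x => fderiv ℝ h x u • v - fderiv ℝ h x v • u := by
  rw [curv_const_eq hD u v hG]
  have h1 : D (VConst v) G = fun x => h x • VConst v x := by rw [DG_eq hg hhess v]; rfl
  have h2 : D (VConst u) G = fun x => h x • VConst u x := by rw [DG_eq hg hhess u]; rfl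
  rw [h1, h2, hD.leibniz h (VConst u) (VConst v) hh contDiff_const contDiff_const,
      hD.leibniz h (VConst v) (VConst u) hh contDiff_const contDiff_const]
  funext x
  simp only [VConst, Pi.add_apply]
  rw [show D (VConst v) (VConst u) = D (VConst u) (VConst v) from (D_const_comm hD u v).symm]
  abel

lemma dh_formula (hg : IsMetric g) (hD : IsLeviCivita g D)
    {h : EE → ℝ} {G : EE → EE} (hh : ContDiff ℝ (⊤ : ℕ∞) h) (hG : ContDiff ℝ (⊤ : ℕ∞) G)
    (hhess : ∀ x u v, hessForm g D G x u v = h x * g x u v) (x : EE) (v : EE) :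
    fderiv ℝ h x v = -((rrf g D x / ddf g x) * g x (G x) v) := by
  have hΔx : ddf g x ≠ 0 := (ddf_pos hg x).ne'
  -- decomposition of the curvature applied to G
  have hGdec : G = (fun y => (G y 0) • ee1) + (fun y => (G y 1) • ee2) :=
    funext fun y => decompEE (G y)
  have hdecomp : curv D (VConst ee1) (VConst ee2) G
      = fun y => (G y 0) • curv D (VConst ee1) (VConst ee2) (VConst ee1) y
               + (G y 1) • curv D (VConst ee1) (VConst ee2) (VConst ee2) y := by
    conv_lhs => rw [hGdec]
    rw [curv_add3 hD, curv_tensor hD _ (coord_smooth hG 0),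
      curv_tensor hD _ (coord_smooth hG 1)]
    rfl
  -- pairing identity
  have hpair : ∀ w : EE, fderiv ℝ h x ee1 * g x ee2 w - fderiv ℝ h x ee2 * g x ee1 w
      = G x 0 * g x (curv D (VConst ee1) (VConst ee2) (VConst ee1) x) w
        + G x 1 * g x (curv D (VConst ee1) (VConst ee2) (VConst ee2) x) w := by
    intro w
    have h1 := congrFun (curvG_eq hg hD hh hG hhess ee1 ee2) x
    have h2 := congrFun hdecomp x
    have h3 : (fderiv ℝ h x ee1 • ee2 - fderiv ℝ h x ee2 • ee1 : EE)
        = G x 0 • curv D (VConst ee1) (VConst ee2) (VConst ee1) x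
          + G x 1 • curv D (VConst ee1) (VConst ee2) (VConst ee2) x := by
      rw [← h1, h2]
    have h4 := congrArg (fun z => g x z w) h3
    simpa [g_sub_left hg, hg.add_left, hg.smul_left] using h4
  -- the special values of the curvature pairings
  have hs11 : g x (curv D (VConst ee1) (VConst ee2) (VConst ee1) x) ee1 = 0 :=
    curv_self_zero hg hD ee1 ee2 ee1 x
  have hs22 : g x (curv D (VConst ee1) (VConst ee2) (VConst ee2) x) ee2 = 0 :=
    curv_self_zero hg hD ee1 ee2 ee2 x
  have hs21 : g x (curv D (VConst ee1) (VConst ee2) (VConst ee2) x) ee1 = rrf g D x := rfl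
  have hs12 : g x (curv D (VConst ee1) (VConst ee2) (VConst ee1) x) ee2 = - rrf g D x := by
    rw [curv_antisym hg hD ee1 ee2 ee1 ee2 x, hs21]
  have heq1 : fderiv ℝ h x ee1 * g x ee2 ee1 - fderiv ℝ h x ee2 * g x ee1 ee1
      = G x 1 * rrf g D x := by
    have := hpair ee1; rw [hs11, hs21] at this; linarith
  have heq2 : fderiv ℝ h x ee1 * g x ee2 ee2 - fderiv ℝ h x ee2 * g x ee1 ee2
      = -(G x 0 * rrf g D x) := by
    have := hpair ee2; rw [hs12, hs22] at this; linarith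
  rw [hg.symm x ee2 ee1] at heq1
  -- solve the linear system : the two coordinate cases
  have key1 : fderiv ℝ h x ee1 * ddf g x
      = -(rrf g D x * (G x 0 * g x ee1 ee1 + G x 1 * g x ee1 ee2)) := by
    simp only [ddf]
    linear_combination (g x ee1 ee1) * heq2 - (g x ee1 ee2) * heq1
  have key2 : fderiv ℝ h x ee2 * ddf g x
      = -(rrf g D x * (G x 0 * g x ee1 ee2 + G x 1 * g x ee2 ee2)) := by
    simp only [ddf]
    linear_combination (g x ee1 ee2) * heq2 - (g x ee2 ee2) * heq1
  have e1eq : fderiv ℝ h x ee1 = -((rrf g D x / ddf g x) * g x (G x) ee1) := by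
    have hGx : g x (G x) ee1 = G x 0 * g x ee1 ee1 + G x 1 * g x ee1 ee2 := by
      conv_lhs => rw [decompEE (G x)]
      rw [hg.add_left, hg.smul_left, hg.smul_left, hg.symm x ee2 ee1]
    rw [hGx]
    field_simp
    linarith [key1]
  have e2eq : fderiv ℝ h x ee2 = -((rrf g D x / ddf g x) * g x (G x) ee2) := by
    have hGx : g x (G x) ee2 = G x 0 * g x ee1 ee2 + G x 1 * g x ee2 ee2 := by
      conv_lhs => rw [decompEE (G x)]
      rw [hg.add_left, hg.smul_left, hg.smul_left]
    rw [hGx]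
    field_simp
    linarith [key2]
  -- general direction
  have hv : fderiv ℝ h x v = v 0 * fderiv ℝ h x ee1 + v 1 * fderiv ℝ h x ee2 := by
    conv_lhs => rw [decompEE v]
    rw [map_add, map_smul, map_smul]
    simp
  have hgv : g x (G x) v = v 0 * g x (G x) ee1 + v 1 * g x (G x) ee2 := by
    conv_lhs => rw [decompEE v]
    rw [g_add_right hg, g_smul_right hg, g_smul_right hg]
  rw [hv, hgv, e1eq, e2eq]
  ring

lemma crit_point (hg : IsMetric g) (hD : IsLeviCivita g D)
    {h : EE → ℝ} {G : EE → EE} (hh : ContDiff ℝ (⊤ : ℕ∞) h) (hG : ContDiff ℝ (⊤ : ℕ∞) G)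
    (hhess : ∀ x u v, hessForm g D G x u v = h x * g x u v)
    (K : EE → ℝ) (hK : ContDiff ℝ (⊤ : ℕ∞) K)
    (hdh : ∀ x v, fderiv ℝ h x v = -(K x * g x (G x) v))
    (p : EE) (hGp : G p = 0) (hhp : h p ≠ 0) :
    fderiv ℝ K p = 0 := by
  have hψ : ∀ v : EE, ContDiff ℝ (⊤ : ℕ∞) (fun x => g x (G x) v) :=
    fun v => gWV_smooth hg hG contDiff_const
  have compatG : ∀ x u v : EE, fderiv ℝ (fun y => g y (G y) v) x u
      = h x * g x u v + g x (G x) (D (VConst u) (VConst v) x) := by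
    intro x u v
    have hc := hD.compat (VConst u) G (VConst v) contDiff_const hG contDiff_const x
    simp only [VConst] at hc
    rw [hc]
    have hDG := congrFun (DG_eq hg hhess u) x
    rw [hDG, hg.smul_left]
  -- derivative of the relation dh = -K g(G,·)
  have hder : ∀ x a b : EE, fderiv ℝ (fun y => fderiv ℝ h y a) x b
      = -(fderiv ℝ K x b * g x (G x) a
          + K x * (h x * g x b a + g x (G x) (D (VConst b) (VConst a) x))) := by
    intro x a b
    have hfe : (fun y => fderiv ℝ h y a) = fun y => -(K y * g y (G y) a) :=
      funext fun y => hdh y a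
    rw [hfe]
    have hK' : DifferentiableAt ℝ K x := hK.differentiable (by simp) x
    have hψ' : DifferentiableAt ℝ (fun y => g y (G y) a) x :=
      (hψ a).differentiable (by simp) x
    have hneg : fderiv ℝ (fun y => -(K y * g y (G y) a)) x
        = -(fderiv ℝ (fun y => K y * g y (G y) a) x) := fderiv_neg
    rw [hneg, fderiv_fun_mul hK' hψ']
    simp only [ContinuousLinearMap.neg_apply, ContinuousLinearMap.add_apply,
      ContinuousLinearMap.smul_apply, smul_eq_mul]
    rw [compatG x b a]
    ring
  -- the symmetry relation
  have sym3 : ∀ x u v : EE, fderiv ℝ K x u * g x (G x) v = fderiv ℝ K x v * g x (G x) u := by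
    intro x u v
    have hsch := schwarz hh x u v
    rw [hder x v u, hder x u v] at hsch
    have hDc := congrFun (D_const_comm hD u v) x
    rw [hDc] at hsch
    have hsymm := hg.symm x u v
    linear_combination (-1 : ℝ) * hsch - K x * h x * hsymm
  -- differentiate the symmetry relation at p
  have key : ∀ u v w : EE, fderiv ℝ K p u * g p w v = fderiv ℝ K p v * g p w u := by
    intro u v w
    have hΘ : (fun x => fderiv ℝ K x u * g x (G x) v - fderiv ℝ K x v * g x (G x) u)
        = fun _ => (0 : ℝ) := funext fun x => by rw [sym3 x u v]; ring
    have hd0 : fderiv ℝ (fun x => fderiv ℝ K x u * g x (G x) v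
        - fderiv ℝ K x v * g x (G x) u) p w = 0 := by
      rw [hΘ]; simp
    have hdKu : DifferentiableAt ℝ (fun x => fderiv ℝ K x u) p :=
      (fderiv_app_smooth hK u).differentiable (by simp) p
    have hdKv : DifferentiableAt ℝ (fun x => fderiv ℝ K x v) p :=
      (fderiv_app_smooth hK v).differentiable (by simp) p
    have hψu : DifferentiableAt ℝ (fun x => g x (G x) u) p :=
      (hψ u).differentiable (by simp) p
    have hψv : DifferentiableAt ℝ (fun x => g x (G x) v) p :=
      (hψ v).differentiable (by simp) p
    rw [fderiv_fun_sub (hdKu.fun_mul hψv) (hdKv.fun_mul hψu)] at hd0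
    rw [ContinuousLinearMap.sub_apply, fderiv_fun_mul hdKu hψv, fderiv_fun_mul hdKv hψu] at hd0
    simp only [ContinuousLinearMap.add_apply, ContinuousLinearMap.smul_apply,
      smul_eq_mul] at hd0
    have hzero : ∀ a : EE, g p (G p) a = 0 := by
      intro a; rw [hGp]; exact g_zero_left hg p a
    rw [compatG p w v, compatG p w u] at hd0
    rw [hzero u, hzero v, hzero (D (VConst w) (VConst v) p), hzero (D (VConst w) (VConst u) p)]
      at hd0
    have hcan : h p * (fderiv ℝ K p u * g p w v) = h p * (fderiv ℝ K p v * g p w u) := by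
      linarith
    exact mul_left_cancel₀ hhp hcan
  -- conclude
  have hα1 : fderiv ℝ K p ee1 = 0 := by
    set q : EE := g p ee1 ee1 • ee2 - g p ee1 ee2 • ee1 with hq
    have hq1 : g p q ee1 = 0 := by
      rw [hq, g_sub_left hg, hg.smul_left, hg.smul_left, hg.symm p ee2 ee1]; ring
    have hg11 : 0 < g p ee1 ee1 := hg.posdef p ee1 ee1_ne
    have hqne : q ≠ 0 := by
      intro hcon
      have h1 : q 1 = 0 := by rw [hcon]; rfl
      have h2 : q 1 = g p ee1 ee1 := by simp [hq, ee1, ee2, EuclideanSpace.single_apply]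
      rw [h2] at h1; linarith
    have hqq : 0 < g p q q := hg.posdef p q hqne
    have hk := key ee1 q q
    rw [hq1, mul_zero] at hk
    rcases mul_eq_zero.mp hk with h' | h'
    · exact h'
    · exact absurd h' hqq.ne'
  have hα2 : fderiv ℝ K p ee2 = 0 := by
    set q : EE := g p ee2 ee2 • ee1 - g p ee1 ee2 • ee2 with hq
    have hq1 : g p q ee2 = 0 := by
      rw [hq, g_sub_left hg, hg.smul_left, hg.smul_left]; ring
    have hg22 : 0 < g p ee2 ee2 := hg.posdef p ee2 ee2_ne
    have hqne : q ≠ 0 := by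
      intro hcon
      have h1 : q 0 = 0 := by rw [hcon]; rfl
      have h2 : q 0 = g p ee2 ee2 := by simp [hq, ee1, ee2, EuclideanSpace.single_apply]
      rw [h2] at h1; linarith
    have hqq : 0 < g p q q := hg.posdef p q hqne
    have hk := key ee2 q q
    rw [hq1, mul_zero] at hk
    rcases mul_eq_zero.mp hk with h' | h'
    · exact h'
    · exact absurd h' hqq.ne'
  apply ContinuousLinearMap.ext
  intro w
  have hw : fderiv ℝ K p w = w 0 * fderiv ℝ K p ee1 + w 1 * fderiv ℝ K p ee2 := by
    conv_lhs => rw [decompEE w]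
    rw [map_add, map_smul, map_smul]; simp
  rw [hw, hα1, hα2]
  simp


end AuxiliaryLemmas

/-- if `p` is the base of a conformal Morse germ on a surface,
i.e. there are `f, h` with `∇f(p) = 0`, `∇²f = h g` and `h(p) ≠ 0`, then `p` is
a critical point of the Gauss curvature: `∇K(p) = 0`. -/
theorem stmt_17
    (g : EuclideanSpace ℝ (Fin 2) → EuclideanSpace ℝ (Fin 2) → EuclideanSpace ℝ (Fin 2) → ℝ)
    (D : (EuclideanSpace ℝ (Fin 2) → EuclideanSpace ℝ (Fin 2)) →
      (EuclideanSpace ℝ (Fin 2) → EuclideanSpace ℝ (Fin 2)) →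
      (EuclideanSpace ℝ (Fin 2) → EuclideanSpace ℝ (Fin 2)))
    (hg : IsMetric g) (hD : IsLeviCivita g D)
    (f h : EuclideanSpace ℝ (Fin 2) → ℝ)
    (G : EuclideanSpace ℝ (Fin 2) → EuclideanSpace ℝ (Fin 2))
    (hf : ContDiff ℝ (⊤ : ℕ∞) f) (hh : ContDiff ℝ (⊤ : ℕ∞) h) (hG : ContDiff ℝ (⊤ : ℕ∞) G)
    (hgrad : IsGradient g f G)
    (p : EuclideanSpace ℝ (Fin 2)) (hGp : G p = 0)
    (hhess : ∀ x u v, hessForm g D G x u v = h x * g x u v)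
    (hhp : h p ≠ 0) :
    fderiv ℝ (fun x => gaussK g D x) p = 0 := by
  have hgoal : (fun x => gaussK g D x) = fun x => rrf g D x / ddf g x :=
    funext fun x => gaussK_eq g D x
  rw [hgoal]
  have hK : ContDiff ℝ (⊤ : ℕ∞) (fun x => rrf g D x / ddf g x) :=
    (rrf_smooth hg hD).div (ddf_smooth hg) (fun x => (ddf_pos hg x).ne')
  exact crit_point hg hD hh hG hhess _ hK
    (fun x v => dh_formula hg hD hh hG hhess x v) p hGp hhp
end
end
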